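/- arXiv:2512.01587 — 6 statements merged into one kernel-verified Lean document; each statement's English description precedes it below -/
import Mathlib

section
/- For every integer t ≥ 1, let H_t be the graph obtained from the complete graph K_t by subdividing every edge exactly twice (so that |V(H_t)| + |E(H_t)| = t + 5·binom(t,2) ≤ 3t²). If a connected finite simple graph G admits an almost-embedding of H_t, then G contains K_t as a minor. -/
open SimpleGraph

/-- A minor model of `H` in `G`. -/
def MinorModel {V W : Type} (G : SimpleGraph V) (H : SimpleGraph W) (C : W → Set V) : Prop :=
  (∀ i, (G.induce (C i)).Connected) ∧
  (Pairwise fun i j => Disjoint (C i) (C j)) ∧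
  (∀ i j, H.Adj i j → ∃ u ∈ C i, ∃ v ∈ C j, G.Adj u v)

/-- `G` contains `H` as a minor. -/
def HasMinor {V W : Type} (G : SimpleGraph V) (H : SimpleGraph W) : Prop :=
  ∃ C : W → Set V, MinorModel G H C

/-- The graph obtained from `K_t` by subdividing every edge exactly twice: the edge
`{i, j}` of `K_t` becomes the path `i — (i,j) — (j,i) — j`. -/
def DoubleSubdividedClique (t : ℕ) :
    SimpleGraph (Fin t ⊕ {p : Fin t × Fin t // p.1 ≠ p.2}) :=
  SimpleGraph.fromRel fun a b =>
    match a, b with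
    | Sum.inl i, Sum.inr q => q.val.1 = i
    | Sum.inr q, Sum.inr q' => q.val.1 = q'.val.2 ∧ q.val.2 = q'.val.1
    | _, _ => False

/-- An almost-embedding of `H` into `G`: vertices of `H` are mapped to vertices of `G`,
each edge `uv` of `H` is mapped to a simple path in `G` from `φ(u)` to `φ(v)`, and paths
of edges sharing no endpoint are vertex-disjoint. -/
structure AlmostEmbedding {α V : Type} (H : SimpleGraph α) (G : SimpleGraph V) where
  toFun : α → V
  path : ∀ ⦃u v : α⦄, H.Adj u v → G.Walk (toFun u) (toFun v)
  path_isPath : ∀ ⦃u v : α⦄ (h : H.Adj u v), (path h).IsPath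
  disjoint : ∀ ⦃u₁ v₁ u₂ v₂ : α⦄ (h₁ : H.Adj u₁ v₁) (h₂ : H.Adj u₂ v₂),
    ({u₁, v₁} : Set α) ∩ {u₂, v₂} = ∅ →
    ∀ x : V, x ∈ (path h₁).support → x ∉ (path h₂).support

/-!
Write `p_i` for the image of the branch vertex `i` of `K_t`, and call the image of the edge
`i — (i,j)` a spoke and the image of `(i,j) — (j,i)` the middle path of `{i, j}`. The hub of `i`,
i.e. `p_i` together with all spokes at `i`, is connected, and hubs of distinct vertices are
disjoint because spokes at distinct vertices are. For `i < j`, walk along the middle path of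
`{i, j}` from the end of the spoke `(i, j)` until just before it first meets the hub of `j`,
and add this piece to the branch set of `i`. The middle path of `{i, j}` avoids spokes at any
third vertex and the middle paths of other pairs, so the branch sets stay disjoint, and the
step just after the piece joins the branch sets of `i` and `j`.
-/

namespace SimpleGraph

variable {V : Type} {G : SimpleGraph V}

lemma Walk.exists_prefix_adj_first_mem (S : Set V) {a b : V} (p : G.Walk a b) (ha : a ∉ S)
    (hb : b ∈ S) :
    ∃ (x y : V) (q : G.Walk a x), G.Adj x y ∧ y ∈ S ∧ (∀ z ∈ q.support, z ∉ S) ∧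
      q.support ⊆ p.support := by
  induction p with
  | nil => exact absurd hb ha
  | @cons a v b hav p ih =>
    by_cases hv : v ∈ S
    · exact ⟨a, v, .nil, hav, hv, by simpa using ha, by simp⟩
    · obtain ⟨x, y, q, hxy, hy, hqS, hqp⟩ := ih hv hb
      refine ⟨x, y, .cons hav q, hxy, hy, ?_, ?_⟩
      · simpa [Walk.support_cons] using ⟨ha, hqS⟩
      · simpa [Walk.support_cons] using List.subset_cons_of_subset a hqp

lemma induce_connected_of_forall_mem_walk_support {s : Set V} {c : V} (hc : c ∈ s)
    (h : ∀ v ∈ s, ∃ (w : V) (p : G.Walk c w), v ∈ p.support ∧ ∀ x ∈ p.support, x ∈ s) :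
    (G.induce s).Connected := by
  refine induce_connected_of_patches c hc fun {v} hv => ?_
  obtain ⟨w, p, hvp, hps⟩ := h v hv
  exact ⟨{x | x ∈ p.support}, hps, p.start_mem_support, hvp,
    p.connected_induce_support.preconnected _ _⟩

end SimpleGraph

open SimpleGraph Sum

namespace DoubleSubdividedClique

variable {t : ℕ}

lemma adj_inl_inr {i j : Fin t} (h : i ≠ j) :
    (DoubleSubdividedClique t).Adj (inl i) (inr ⟨(i, j), h⟩) := by
  simp [DoubleSubdividedClique, fromRel_adj]

lemma adj_inr_inr {i j : Fin t} (h : i ≠ j) :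
    (DoubleSubdividedClique t).Adj (inr ⟨(i, j), h⟩) (inr ⟨(j, i), h.symm⟩) := by
  simp [DoubleSubdividedClique, fromRel_adj, h]

lemma inr_ne_inr {i j k l : Fin t} (hij : i ≠ j) (hkl : k ≠ l) (h : i ≠ k ∨ j ≠ l) :
    (inr ⟨(i, j), hij⟩ : Fin t ⊕ {p : Fin t × Fin t // p.1 ≠ p.2}) ≠ inr ⟨(k, l), hkl⟩ := by
  simp only [ne_eq, inr.injEq, Subtype.mk.injEq, Prod.mk.injEq, not_and_or]
  exact h

end DoubleSubdividedClique

open DoubleSubdividedClique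

namespace AlmostEmbedding

lemma support_disjoint {α V : Type} {H : SimpleGraph α} {G : SimpleGraph V}
    (e : AlmostEmbedding H G) {u₁ v₁ u₂ v₂ : α} (h₁ : H.Adj u₁ v₁) (h₂ : H.Adj u₂ v₂)
    (hu₁u₂ : u₁ ≠ u₂) (hu₁v₂ : u₁ ≠ v₂) (hv₁u₂ : v₁ ≠ u₂) (hv₁v₂ : v₁ ≠ v₂) :
    (e.path h₁).support.Disjoint (e.path h₂).support := by
  refine fun x hx₁ hx₂ => e.disjoint h₁ h₂ ?_ x hx₁ hx₂
  ext y
  simp only [Set.mem_inter_iff, Set.mem_insert_iff, Set.mem_singleton_iff,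
    Set.mem_empty_iff_false, iff_false, not_and]
  rintro (rfl | rfl) (rfl | rfl) <;> contradiction

variable {t : ℕ} {V : Type} {G : SimpleGraph V}
  (e : AlmostEmbedding (DoubleSubdividedClique t) G)

def spoke {i j : Fin t} (h : i ≠ j) :
    G.Walk (e.toFun (inl i)) (e.toFun (inr ⟨(i, j), h⟩)) :=
  e.path (adj_inl_inr h)

def mid {i j : Fin t} (h : i ≠ j) :
    G.Walk (e.toFun (inr ⟨(i, j), h⟩)) (e.toFun (inr ⟨(j, i), h.symm⟩)) :=
  e.path (adj_inr_inr h)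

lemma spoke_support_disjoint {i j k l : Fin t} (hij : i ≠ j) (hkl : k ≠ l) (hik : i ≠ k) :
    (e.spoke hij).support.Disjoint (e.spoke hkl).support :=
  e.support_disjoint _ _ (by simpa using hik) (by simp) (by simp) (inr_ne_inr _ _ (.inl hik))

lemma mid_spoke_support_disjoint {i j k l : Fin t} (hij : i ≠ j) (hkl : k ≠ l) (hik : i ≠ k)
    (hjk : j ≠ k) : (e.mid hij).support.Disjoint (e.spoke hkl).support :=
  e.support_disjoint _ _ (by simp) (inr_ne_inr _ _ (.inl hik)) (by simp)
    (inr_ne_inr _ _ (.inl hjk))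

lemma mid_support_disjoint {i j k l : Fin t} (hij : i ≠ j) (hkl : k ≠ l)
    (h₁ : i ≠ k ∨ j ≠ l) (h₂ : i ≠ l ∨ j ≠ k) : (e.mid hij).support.Disjoint (e.mid hkl).support :=
  e.support_disjoint _ _ (inr_ne_inr _ _ h₁) (inr_ne_inr _ _ h₂) (inr_ne_inr _ _ h₂.symm)
    (inr_ne_inr _ _ h₁.symm)

def hub (i : Fin t) : Set V :=
  {e.toFun (inl i)} ∪ ⋃ (j) (h : i ≠ j), {x | x ∈ (e.spoke h).support}

lemma mem_hub_of_mem_spoke {i j : Fin t} (h : i ≠ j) {x : V} (hx : x ∈ (e.spoke h).support) :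
    x ∈ e.hub i :=
  .inr (Set.mem_iUnion₂.mpr ⟨j, h, hx⟩)

lemma exists_mem_spoke_of_mem_hub {i k : Fin t} (hik : i ≠ k) {x : V} (hx : x ∈ e.hub i) :
    ∃ (j : Fin t) (h : i ≠ j), x ∈ (e.spoke h).support := by
  rcases hx with rfl | hx
  · exact ⟨k, hik, (e.spoke hik).start_mem_support⟩
  · simpa using hx

lemma hub_disjoint {i j : Fin t} (hij : i ≠ j) : Disjoint (e.hub i) (e.hub j) := by
  refine Set.disjoint_left.mpr fun x hxi hxj => ?_
  obtain ⟨k, hik, hxk⟩ := e.exists_mem_spoke_of_mem_hub hij hxi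
  obtain ⟨l, hjl, hxl⟩ := e.exists_mem_spoke_of_mem_hub hij.symm hxj
  exact e.spoke_support_disjoint hik hjl hij hxk hxl

lemma mid_disjoint_hub {i j k : Fin t} (hij : i ≠ j) (hik : i ≠ k) (hjk : j ≠ k) :
    Disjoint {x | x ∈ (e.mid hij).support} (e.hub k) := by
  refine Set.disjoint_left.mpr fun x hxm hxk => ?_
  obtain ⟨l, hkl, hxl⟩ := e.exists_mem_spoke_of_mem_hub hik.symm hxk
  exact e.mid_spoke_support_disjoint hij hkl hik hjk hxm hxl

structure Link {i j : Fin t} (h : i ≠ j) where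
  last : V
  walk : G.Walk (e.toFun (inr ⟨(i, j), h⟩)) last
  support_subset_mid : walk.support ⊆ (e.mid h).support
  support_disjoint_hub : ∀ x ∈ walk.support, x ∉ e.hub j
  exists_adj_hub : ∃ y ∈ e.hub j, G.Adj last y

lemma nonempty_link {i j : Fin t} (h : i ≠ j) : Nonempty (e.Link h) := by
  have hstart : e.toFun (inr ⟨(i, j), h⟩) ∉ e.hub j := fun hmem => by
    obtain ⟨l, hjl, hx⟩ := e.exists_mem_spoke_of_mem_hub h.symm hmem
    exact e.spoke_support_disjoint h hjl h (e.spoke h).end_mem_support hx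
  have hend : e.toFun (inr ⟨(j, i), h.symm⟩) ∈ e.hub j :=
    e.mem_hub_of_mem_spoke h.symm (e.spoke h.symm).end_mem_support
  obtain ⟨x, y, q, hxy, hy, hq, hqmid⟩ := (e.mid h).exists_prefix_adj_first_mem _ hstart hend
  exact ⟨⟨x, q, hqmid, hq, y, hy, hxy⟩⟩

noncomputable def link {i j : Fin t} (h : i ≠ j) : e.Link h :=
  (e.nonempty_link h).some

def linkSet {i j : Fin t} (h : i ≠ j) : Set V :=
  {x | x ∈ (e.link h).walk.support}

lemma linkSet_subset_mid {i j : Fin t} (h : i ≠ j) :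
    e.linkSet h ⊆ {x | x ∈ (e.mid h).support} :=
  fun _ hx => (e.link h).support_subset_mid hx

lemma linkSet_disjoint_hub {i j k : Fin t} (hij : i ≠ j) (hk : k ≠ i) :
    Disjoint (e.linkSet hij) (e.hub k) := by
  by_cases hjk : j = k
  · subst hjk
    exact Set.disjoint_left.mpr (e.link hij).support_disjoint_hub
  · exact (e.mid_disjoint_hub hij hk.symm hjk).mono_left (e.linkSet_subset_mid hij)

lemma linkSet_disjoint {i j k l : Fin t} (hij : i < j) (hkl : k < l) (hik : i ≠ k) :
    Disjoint (e.linkSet hij.ne) (e.linkSet hkl.ne) := by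
  refine (Set.disjoint_left.mpr fun x hx hx' => ?_).mono (e.linkSet_subset_mid _)
    (e.linkSet_subset_mid _)
  refine e.mid_support_disjoint hij.ne hkl.ne (.inl hik) ?_ hx hx'
  -- `i = l` and `j = k` would give `i < j = k < l = i`
  by_contra! h
  exact (hij.trans_eq h.2).not_gt (hkl.trans_eq h.1.symm)

def branchSet (i : Fin t) : Set V :=
  e.hub i ∪ ⋃ (j) (h : i < j), e.linkSet h.ne

lemma branchSet_connected (i : Fin t) : (G.induce (e.branchSet i)).Connected := by
  refine induce_connected_of_forall_mem_walk_support (c := e.toFun (inl i)) (.inl (.inl rfl)) ?_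
  rintro x ((rfl | hx) | hx)
  · exact ⟨_, .nil, by simp, by simpa using .inl (.inl rfl)⟩
  · obtain ⟨j, hij, hx⟩ := Set.mem_iUnion₂.mp hx
    exact ⟨_, e.spoke hij, hx, fun y hy => .inl (e.mem_hub_of_mem_spoke hij hy)⟩
  · obtain ⟨j, hij, hx⟩ := Set.mem_iUnion₂.mp hx
    refine ⟨_, (e.spoke hij.ne).append (e.link hij.ne).walk,
      (Walk.mem_support_append_iff _ _).mpr (.inr hx), fun y hy => ?_⟩
    rcases (Walk.mem_support_append_iff _ _).mp hy with hy | hy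
    · exact .inl (e.mem_hub_of_mem_spoke hij.ne hy)
    · exact .inr (Set.mem_iUnion₂.mpr ⟨j, hij, hy⟩)

lemma branchSet_disjoint {i j : Fin t} (hij : i ≠ j) :
    Disjoint (e.branchSet i) (e.branchSet j) := by
  simp only [branchSet, Set.disjoint_union_left, Set.disjoint_union_right,
    Set.disjoint_iUnion_left, Set.disjoint_iUnion_right]
  exact ⟨⟨e.hub_disjoint hij, fun k hik => e.linkSet_disjoint_hub hik.ne hij.symm⟩,
    fun l hjl => ⟨(e.linkSet_disjoint_hub hjl.ne hij).symm, fun k hik =>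
      e.linkSet_disjoint hik hjl hij⟩⟩

lemma exists_adj_branchSet {i j : Fin t} (hij : i < j) :
    ∃ x ∈ e.branchSet i, ∃ y ∈ e.branchSet j, G.Adj x y := by
  obtain ⟨y, hy, hxy⟩ := (e.link hij.ne).exists_adj_hub
  exact ⟨_, .inr (Set.mem_iUnion₂.mpr ⟨j, hij, (e.link hij.ne).walk.end_mem_support⟩),
    y, .inl hy, hxy⟩

theorem minorModel_branchSet : MinorModel G (⊤ : SimpleGraph (Fin t)) e.branchSet := by
  refine ⟨e.branchSet_connected, fun i j hij => e.branchSet_disjoint hij, fun i j hij => ?_⟩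
  rcases (top_adj i j).mp hij |>.lt_or_gt with hlt | hlt
  · exact e.exists_adj_branchSet hlt
  · obtain ⟨x, hx, y, hy, hxy⟩ := e.exists_adj_branchSet hlt
    exact ⟨y, hy, x, hx, hxy.symm⟩

end AlmostEmbedding

theorem statement3_general (t : ℕ) {V : Type} (G : SimpleGraph V)
    (h : Nonempty (AlmostEmbedding (DoubleSubdividedClique t) G)) :
    HasMinor G (⊤ : SimpleGraph (Fin t)) :=
  let ⟨e⟩ := h
  ⟨e.branchSet, e.minorModel_branchSet⟩

/-- If a connected finite simple graph admits an almost-embedding of the double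
subdivision of `K_t`, then it contains `K_t` as a minor. -/
theorem statement3 (t : ℕ) (ht : 1 ≤ t) {V : Type} [Fintype V] (G : SimpleGraph V)
    (hG : G.Connected) (h : Nonempty (AlmostEmbedding (DoubleSubdividedClique t) G)) :
    HasMinor G (⊤ : SimpleGraph (Fin t)) :=
  statement3_general t G h
end

section
/- Let G be a connected finite simple graph on n vertices that admits a stochastic connector of size k, and let t ≥ 1 be an integer with 20t² ≤ k. Then G contains K_t as a minor. -/
open SimpleGraph

/-- `x` lies on the (unique) path from `r` to `u` in the tree-subgraph `T`. -/
def OnRootPath {V : Type} {G : SimpleGraph V} (T : G.Subgraph) (r u : T.verts) (x : V) :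
    Prop :=
  ∃ p : T.coe.Walk r u, p.IsPath ∧ x ∈ p.support.map Subtype.val

/-- A stochastic connector of size `k` in `G`: a family of `k` rooted trees, each a
subgraph of `G` containing at least `n - n/(10k)` vertices, such that for `i ≠ j`, when
endpoints are chosen independently and uniformly in `V(T_i)` and `V(T_j)`, the probability
that the two corresponding root-paths share a vertex is at most `1/(5k²)`. -/
structure StochasticConnector {V : Type} [Fintype V] (G : SimpleGraph V) (k : ℕ) where
  T : Fin k → G.Subgraph
  root : ∀ i, ↥(T i).verts
  tree : ∀ i, (T i).coe.IsTree
  large : ∀ i, (Fintype.card V : ℝ) - (Fintype.card V : ℝ) / (10 * k) ≤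
    Nat.card (T i).verts
  collision : ∀ i j, i ≠ j →
    (Nat.card {p : (T i).verts × (T j).verts |
        ∃ x : V, OnRootPath (T i) (root i) p.1 x ∧ OnRootPath (T j) (root j) p.2 x} : ℝ)
      ≤ 1 / (5 * (k : ℝ) ^ 2) * Nat.card (T i).verts * Nat.card (T j).verts

/-!
Give every pair `{a, b}` of indices in `Fin t` its own tree `T_{ab}` of the connector (there are
at most `t² ≤ k` such pairs, diagonal ones included) and choose `z : Fin t → V` uniformly at
random. By the union bound, with positive probability every `z a` lies in every `T_{ab}`, and
for `a ≠ c` and `{a, b} ≠ {c, d}` the root path of `z a` in `T_{ab}` misses the root path of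
`z c` in `T_{cd}`: the failure probability is at most `t²/(10k) + t⁴/(5k²) < 1`. In `T_{ab}` the
root paths of `z a` and `z b` contain disjoint adjacent connected pieces around `z a` and `z b`;
the branch set of `a` is the union over `b` of the pieces around `z a`.
-/

section Counting

variable {ι α β : Type*} [Finite ι] [Finite α]

theorem ncard_setOf_mem_mul_pow_le [Finite β] (s : Set ι) (key : (ι → α) → β) (S : Set β)
    (hkey : ∀ z w, key z = key w → ∀ i ∈ s, z i = w i) :
    {z : ι → α | key z ∈ S}.ncard * Nat.card α ^ s.ncard ≤
      S.ncard * Nat.card α ^ Nat.card ι := by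
  have hinj : Function.Injective fun z : {z : ι → α | key z ∈ S} =>
      ((⟨key z, z.2⟩ : S), fun i : ↥sᶜ => (z : ι → α) i) := by
    rintro ⟨z, hz⟩ ⟨w, hw⟩ h
    simp only [Prod.mk.injEq, Subtype.mk.injEq, funext_iff] at h
    ext i
    by_cases hi : i ∈ s
    · exact hkey z w h.1 i hi
    · exact h.2 ⟨i, hi⟩
  have hcard := Nat.card_le_card_of_injective _ hinj
  rw [Nat.card_prod, Nat.card_fun, Nat.card_coe_set_eq, Nat.card_coe_set_eq,
    Nat.card_coe_set_eq] at hcard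
  calc _ ≤ S.ncard * Nat.card α ^ sᶜ.ncard * Nat.card α ^ s.ncard := by gcongr
    _ = _ := by rw [mul_assoc, ← pow_add, add_comm, Set.ncard_add_ncard_compl]

theorem ncard_setOf_apply_mem_mul_le (a : ι) (S : Set α) :
    {z : ι → α | z a ∈ S}.ncard * Nat.card α ≤ S.ncard * Nat.card α ^ Nat.card ι := by
  simpa using ncard_setOf_mem_mul_pow_le {a} (fun z => z a) S (by simp)

theorem ncard_setOf_apply_pair_mem_mul_le {a b : ι} (hab : a ≠ b) (S : Set (α × α)) :
    {z : ι → α | (z a, z b) ∈ S}.ncard * Nat.card α ^ 2 ≤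
      S.ncard * Nat.card α ^ Nat.card ι := by
  simpa [Set.ncard_pair hab] using
    ncard_setOf_mem_mul_pow_le {a, b} (fun z => (z a, z b)) S (by simp)

end Counting

theorem sq_mul_div_add_pow_four_mul_div_lt {N k t : ℝ} (hN : 0 < N) (hkt : 20 * t ^ 2 ≤ k) :
    t ^ 2 * (N / (10 * k)) + t ^ 4 * (N / (5 * k ^ 2)) < N := by
  rcases (show (0 : ℝ) ≤ k by nlinarith).eq_or_lt with rfl | hk
  · obtain rfl : t = 0 := by nlinarith
    simpa using hN
  have e₁ : t ^ 2 * (N / (10 * k)) ≤ N / 200 := by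
    rw [← mul_div_assoc, div_le_div_iff₀ (by positivity) (by norm_num)]
    nlinarith
  have e₂ : t ^ 4 * (N / (5 * k ^ 2)) ≤ N / 2000 := by
    rw [← mul_div_assoc, div_le_div_iff₀ (by positivity) (by norm_num)]
    have : 400 * t ^ 4 ≤ k ^ 2 := by nlinarith
    nlinarith
  linarith

theorem exists_symmetric_choice {ι α : Type*} [LinearOrder ι] (R : ι → ι → α → α → Prop)
    (d : ι → α) (hR : ∀ a b, a < b → ∃ x y, R a b x y)
    (hsymm : ∀ a b x y, R a b x y → R b a y x) :
    ∃ f : ι → ι → α, (∀ a, f a a = d a) ∧ ∀ a b, a ≠ b → R a b (f a b) (f b a) := by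
  choose x y hxy using hR
  refine ⟨fun a b => if h : a < b then x a b h else if h' : b < a then y b a h' else d a,
    fun a => by simp, fun a b hab => ?_⟩
  rcases hab.lt_or_gt with h | h
  · simpa [h, h.not_gt] using hxy a b h
  · simpa [h, h.not_gt] using hsymm _ _ _ _ (hxy b a h)

namespace SimpleGraph

variable {V : Type*} {G : SimpleGraph V}

structure IsBranchPair (G : SimpleGraph V) (A B : Set V) : Prop where
  disjoint : Disjoint A B
  connected_left : (G.induce A).Connected
  connected_right : (G.induce B).Connected
  exists_adj : ∃ u ∈ A, ∃ v ∈ B, G.Adj u v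

theorem IsBranchPair.symm {A B : Set V} (h : G.IsBranchPair A B) : G.IsBranchPair B A := by
  obtain ⟨hdisj, hA, hB, u, hu, v, hv, huv⟩ := h
  exact ⟨hdisj.symm, hB, hA, v, hv, u, hu, huv.symm⟩

namespace Walk

theorem exists_walk_to_first_mem {u v : V} (W : G.Walk u v) (S : Set V) (hv : v ∈ S) :
    ∃ m ∈ S, ∃ W' : G.Walk u m, W'.support ⊆ W.support ∧ ∀ w ∈ W'.support, w ∈ S → w = m := by
  induction W with
  | nil => exact ⟨_, hv, nil, by simp, by simp⟩
  | @cons u _ _ h W ih =>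
    by_cases hu : u ∈ S
    · exact ⟨u, hu, nil, by simp, by simp⟩
    obtain ⟨m, hm, W', hW'W, hfirst⟩ := ih hv
    refine ⟨m, hm, cons h W', by simpa using List.cons_subset_cons u hW'W, ?_⟩
    intro w hw hwS
    rcases List.mem_cons.mp hw with rfl | hw
    · exact absurd hwS hu
    · exact hfirst w hw hwS

theorem isBranchPair_support_tail {w m v : V} (W : G.Walk w m) (p : G.Walk m v)
    (hp : p.IsPath) (hmv : m ≠ v) (hWp : ∀ u ∈ W.support, u ∈ p.support → u = m) :
    G.IsBranchPair {u | u ∈ W.support} {u | u ∈ p.support.tail} := by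
  have hnil : ¬p.Nil := not_nil_of_ne hmv
  have hm : m ∉ p.support.tail := by
    have := hp.support_nodup
    rw [← p.cons_tail_support] at this
    exact (List.nodup_cons.mp this).1
  rw [← p.support_tail_of_not_nil hnil]
  refine ⟨Set.disjoint_left.mpr fun u huW hup => ?_, W.connected_induce_support,
    p.tail.connected_induce_support, m, W.end_mem_support, p.snd, p.tail.start_mem_support,
    adj_snd hnil⟩
  rw [Set.mem_ofPred_eq, p.support_tail_of_not_nil hnil] at hup
  obtain rfl := hWp u huW (List.mem_of_mem_tail hup)
  exact hm hup

theorem exists_isBranchPair_of_isPath {r x y : V} (P : G.Walk r x) (Q : G.Walk r y)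
    (hP : P.IsPath) (hQ : Q.IsPath) (hxy : x ≠ y) :
    ∃ A B, A ⊆ {v | v ∈ P.support} ∧ B ⊆ {v | v ∈ Q.support} ∧ x ∈ A ∧ y ∈ B ∧
      G.IsBranchPair A B := by
  classical
  -- If `y` lies on `P`, cut `P` just after `y`; otherwise follow `P` back from `x` to its first
  -- vertex `m` on `Q`, and cut `Q` just after `m`.
  by_cases hyP : y ∈ P.support
  · refine ⟨_, _, fun u hu => P.support_dropUntil_subset_support hyP (List.mem_of_mem_tail hu),
      by simp, end_mem_tail_support (not_nil_of_ne hxy.symm), (nil : G.Walk y y).start_mem_support,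
      (isBranchPair_support_tail nil _ (hP.dropUntil hyP) hxy.symm (by simp)).symm⟩
  · obtain ⟨m, hmQ, W, hWP, hfirst⟩ :=
      exists_walk_to_first_mem P.reverse {v | v ∈ Q.support} Q.start_mem_support
    have hmy : m ≠ y := by
      rintro rfl
      exact hyP (by simpa using hWP W.end_mem_support)
    refine ⟨_, _, fun u hu => by simpa using hWP hu,
      fun u hu => Q.support_dropUntil_subset_support hmQ (List.mem_of_mem_tail hu),
      W.start_mem_support, end_mem_tail_support (not_nil_of_ne hmy),
      isBranchPair_support_tail W _ (hQ.dropUntil hmQ) hmy fun u hu hup =>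
        hfirst u hu (Q.support_dropUntil_subset_support hmQ hup)⟩

end Walk

end SimpleGraph

theorem hasMinor_of_segments {V W : Type} {G : SimpleGraph V} {H : SimpleGraph W}
    (z : W → V) (seg : W → W → Set V) (hz : ∀ a b, z a ∈ seg a b)
    (hconn : ∀ a b, (G.induce (seg a b)).Connected)
    (hdisj : ∀ a b c d, a ≠ c → Disjoint (seg a b) (seg c d))
    (hadj : ∀ a b, H.Adj a b → ∃ u ∈ seg a b, ∃ v ∈ seg b a, G.Adj u v) :
    HasMinor G H := by
  refine ⟨fun a => ⋃ b, seg a b, fun a => ?_, fun a c hac => ?_, fun a b hab => ?_⟩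
  · refine G.induce_connected_of_patches (z a) (Set.mem_iUnion.2 ⟨a, hz a a⟩) fun hv => ?_
    obtain ⟨b, hb⟩ := Set.mem_iUnion.1 hv
    exact ⟨seg a b, Set.subset_iUnion _ b, hz a b, hb, (hconn a b).preconnected _ _⟩
  · exact Set.disjoint_iUnion_left.2 fun b => Set.disjoint_iUnion_right.2 fun d => hdisj a b c d hac
  · obtain ⟨u, hu, v, hv, huv⟩ := hadj a b hab
    exact ⟨u, Set.mem_iUnion.2 ⟨b, hu⟩, v, Set.mem_iUnion.2 ⟨a, hv⟩, huv⟩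

namespace SimpleGraph.Subgraph

variable {V : Type} {G : SimpleGraph V} (T : G.Subgraph) (r : T.verts)

def rootPath (v : V) : Set V :=
  {x | ∃ hv : v ∈ T.verts, OnRootPath T r ⟨v, hv⟩ x}

variable {T} (hT : T.coe.Preconnected)
include hT

theorem exists_isPath_support_subset_rootPath {v : V} (hv : v ∈ T.verts) :
    ∃ P : G.Walk r v, P.IsPath ∧ {x | x ∈ P.support} ⊆ T.rootPath r v := by
  classical
  obtain ⟨w⟩ := hT r ⟨v, hv⟩
  refine ⟨w.bypass.map T.hom, w.bypass_isPath.map hom_injective,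
    fun x hx => ⟨hv, w.bypass, w.bypass_isPath, ?_⟩⟩
  exact (w.bypass.support_map T.hom).subst (motive := fun l => x ∈ l) hx

theorem mem_rootPath_self {v : V} (hv : v ∈ T.verts) : v ∈ T.rootPath r v := by
  obtain ⟨P, -, hP⟩ := exists_isPath_support_subset_rootPath r hT hv
  exact hP P.end_mem_support

theorem exists_isBranchPair_subset_rootPath {x y : V} (hx : x ∈ T.verts) (hy : y ∈ T.verts)
    (hxy : x ≠ y) :
    ∃ A B, A ⊆ T.rootPath r x ∧ B ⊆ T.rootPath r y ∧ x ∈ A ∧ y ∈ B ∧ G.IsBranchPair A B := by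
  obtain ⟨P, hP, hPr⟩ := exists_isPath_support_subset_rootPath r hT hx
  obtain ⟨Q, hQ, hQr⟩ := exists_isPath_support_subset_rootPath r hT hy
  obtain ⟨A, B, hAP, hBQ, hxA, hyB, hAB⟩ := P.exists_isBranchPair_of_isPath Q hP hQ hxy
  exact ⟨A, B, hAP.trans hPr, hBQ.trans hQr, hxA, hyB, hAB⟩

end SimpleGraph.Subgraph

namespace StochasticConnector

variable {V : Type} [Fintype V] {G : SimpleGraph V} {k : ℕ} (SC : StochasticConnector G k)

def rootPath (i : Fin k) : V → Set V :=
  (SC.T i).rootPath (SC.root i)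

def collisions (i j : Fin k) : Set (V × V) :=
  {w | ¬Disjoint (SC.rootPath i w.1) (SC.rootPath j w.2)}

theorem ncard_collisions_le {i j : Fin k} (hij : i ≠ j) :
    ((SC.collisions i j).ncard : ℝ) ≤ Fintype.card V ^ 2 / (5 * k ^ 2) := by
  have hsub : SC.collisions i j ⊆ (fun p => ((p.1 : V), (p.2 : V))) ''
      {p : (SC.T i).verts × (SC.T j).verts |
        ∃ x : V, OnRootPath (SC.T i) (SC.root i) p.1 x ∧
          OnRootPath (SC.T j) (SC.root j) p.2 x} := by
    rintro ⟨u, v⟩ h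
    obtain ⟨x, ⟨hu, hux⟩, hv, hvx⟩ := Set.not_disjoint_iff.1 h
    exact ⟨(⟨u, hu⟩, ⟨v, hv⟩), ⟨x, hux, hvx⟩, rfl⟩
  have hcard :=
    (Set.ncard_le_ncard hsub (Set.toFinite _)).trans (Set.ncard_image_le (Set.toFinite _))
  rw [← Nat.card_coe_set_eq] at hcard
  have hverts : ∀ i, Nat.card (SC.T i).verts ≤ Fintype.card V := fun i =>
    (Finite.card_subtype_le _).trans_eq Nat.card_eq_fintype_card
  calc ((SC.collisions i j).ncard : ℝ) ≤ _ := by exact_mod_cast hcard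
    _ ≤ 1 / (5 * (k : ℝ) ^ 2) * Nat.card (SC.T i).verts * Nat.card (SC.T j).verts :=
      SC.collision i j hij
    _ ≤ 1 / (5 * (k : ℝ) ^ 2) * Fintype.card V * Fintype.card V := by
      gcongr
      exacts [hverts i, hverts j]
    _ = Fintype.card V ^ 2 / (5 * k ^ 2) := by ring

theorem ncard_compl_verts_le (i : Fin k) :
    (((SC.T i).verts)ᶜ.ncard : ℝ) ≤ Fintype.card V / (10 * k) := by
  have hsum := Set.ncard_add_ncard_compl (SC.T i).verts
  rw [Nat.card_eq_fintype_card] at hsum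
  have hlarge := SC.large i
  rw [Nat.card_coe_set_eq] at hlarge
  have : (((SC.T i).verts).ncard : ℝ) + ((SC.T i).verts)ᶜ.ncard = Fintype.card V := by
    exact_mod_cast hsum
  linarith

theorem mem_rootPath_self {i : Fin k} {v : V} (hv : v ∈ (SC.T i).verts) : v ∈ SC.rootPath i v :=
  (SC.T i).mem_rootPath_self (SC.root i) (SC.tree i).connected.preconnected hv

theorem exists_segments {ι : Type*} [LinearOrder ι] (τ : ι → ι → Fin k)
    (hτ : ∀ a b, τ a b = τ b a) (z : ι → V) (hzT : ∀ a b, z a ∈ (SC.T (τ a b)).verts)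
    (hz : Function.Injective z) :
    ∃ seg : ι → ι → Set V,
      (∀ a b, seg a b ⊆ SC.rootPath (τ a b) (z a) ∧ z a ∈ seg a b ∧
        (G.induce (seg a b)).Connected) ∧
      ∀ a b, a ≠ b → G.IsBranchPair (seg a b) (seg b a) := by
  obtain ⟨seg, hdiag, hseg⟩ := exists_symmetric_choice
    (fun a b A B => A ⊆ SC.rootPath (τ a b) (z a) ∧ B ⊆ SC.rootPath (τ a b) (z b) ∧
      z a ∈ A ∧ z b ∈ B ∧ G.IsBranchPair A B)
    (fun a => {z a})
    (fun a b hab => (SC.T (τ a b)).exists_isBranchPair_subset_rootPath (SC.root _)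
      (SC.tree _).connected.preconnected (hzT a b) (hτ a b ▸ hzT b a) (hz.ne hab.ne))
    (fun a b A B ⟨hA, hB, ha, hb, h⟩ => ⟨hτ a b ▸ hB, hτ a b ▸ hA, hb, ha, h.symm⟩)
  refine ⟨seg, fun a b => ?_, fun a b hab => (hseg a b hab).2.2.2.2⟩
  rcases eq_or_ne a b with rfl | hab
  · rw [hdiag]
    exact ⟨Set.singleton_subset_iff.2 (SC.mem_rootPath_self (hzT a a)), rfl,
      by simp [connected_top]⟩
  · obtain ⟨hA, -, ha, -, h⟩ := hseg a b hab
    exact ⟨hA, ha, h.connected_left⟩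

variable [Nonempty V]

theorem ncard_setOf_apply_notMem_verts_le {ι : Type*} [Finite ι] (i : Fin k) (a : ι) :
    ({z : ι → V | z a ∉ (SC.T i).verts}.ncard : ℝ) ≤ Fintype.card V ^ Nat.card ι / (10 * k) := by
  set n := Fintype.card V
  have hn : (0 : ℝ) < n := by exact_mod_cast Fintype.card_pos
  have hE := ncard_setOf_apply_mem_mul_le (α := V) a (SC.T i).vertsᶜ
  rw [Nat.card_eq_fintype_card] at hE
  have hE' : ({z : ι → V | z a ∉ (SC.T i).verts}.ncard : ℝ) * n ≤ n / (10 * k) * n ^ Nat.card ι :=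
    calc _ ≤ ((SC.T i).vertsᶜ.ncard : ℝ) * n ^ Nat.card ι := by exact_mod_cast hE
      _ ≤ _ := by gcongr; exact SC.ncard_compl_verts_le i
  calc _ = ({z : ι → V | z a ∉ (SC.T i).verts}.ncard : ℝ) * n / n := by field_simp
    _ ≤ n / (10 * k) * n ^ Nat.card ι / n := by gcongr
    _ = n ^ Nat.card ι / (10 * k) := by field_simp

theorem ncard_setOf_apply_pair_mem_collisions_le {ι : Type*} [Finite ι] {i j : Fin k}
    (hij : i ≠ j) {a b : ι} (hab : a ≠ b) :
    ({z : ι → V | (z a, z b) ∈ SC.collisions i j}.ncard : ℝ) ≤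
      Fintype.card V ^ Nat.card ι / (5 * k ^ 2) := by
  set n := Fintype.card V
  have hn : (0 : ℝ) < n := by exact_mod_cast Fintype.card_pos
  have hE := ncard_setOf_apply_pair_mem_mul_le (α := V) hab (SC.collisions i j)
  rw [Nat.card_eq_fintype_card] at hE
  have hE' : ({z : ι → V | (z a, z b) ∈ SC.collisions i j}.ncard : ℝ) * n ^ 2 ≤
      n ^ 2 / (5 * k ^ 2) * n ^ Nat.card ι :=
    calc _ ≤ ((SC.collisions i j).ncard : ℝ) * n ^ Nat.card ι := by exact_mod_cast hE
      _ ≤ _ := by gcongr; exact SC.ncard_collisions_le hij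
  calc _ = ({z : ι → V | (z a, z b) ∈ SC.collisions i j}.ncard : ℝ) * n ^ 2 / n ^ 2 := by
        field_simp
    _ ≤ n ^ 2 / (5 * k ^ 2) * n ^ Nat.card ι / n ^ 2 := by gcongr
    _ = n ^ Nat.card ι / (5 * k ^ 2) := by field_simp

theorem exists_tuple_disjoint_rootPath {t : ℕ} (τ : Fin t → Fin t → Fin k)
    (hkt : 20 * t ^ 2 ≤ k) :
    ∃ z : Fin t → V, (∀ a b, z a ∈ (SC.T (τ a b)).verts) ∧
      ∀ a b c d, a ≠ c → τ a b ≠ τ c d →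
        Disjoint (SC.rootPath (τ a b) (z a)) (SC.rootPath (τ c d) (z c)) := by
  set n := Fintype.card V
  let κ := {q : (Fin t × Fin t) × (Fin t × Fin t) //
    q.1.1 ≠ q.2.1 ∧ τ q.1.1 q.1.2 ≠ τ q.2.1 q.2.2}
  let E₁ : Fin t × Fin t → Set (Fin t → V) := fun p => {z | z p.1 ∉ (SC.T (τ p.1 p.2)).verts}
  let E₂ : κ → Set (Fin t → V) := fun q =>
    {z | (z q.1.1.1, z q.1.2.1) ∈ SC.collisions (τ q.1.1.1 q.1.1.2) (τ q.1.2.1 q.1.2.2)}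
  have hE₁ : ((⋃ p, E₁ p).ncard : ℝ) ≤ t ^ 2 * (n ^ t / (10 * k)) :=
    calc _ ≤ ∑ p, ((E₁ p).ncard : ℝ) := by exact_mod_cast Set.ncard_iUnion_le_of_fintype E₁
      _ ≤ _ := (Finset.sum_le_card_nsmul _ _ _ fun p _ => by
          simpa using SC.ncard_setOf_apply_notMem_verts_le (τ p.1 p.2) p.1).trans_eq (by
        rw [Finset.card_univ, Fintype.card_prod, Fintype.card_fin, nsmul_eq_mul]; push_cast; ring)
  have hκ : Fintype.card κ ≤ t ^ 4 := (Fintype.card_subtype_le _).trans_eq (by simp; ring)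
  have hE₂ : ((⋃ q, E₂ q).ncard : ℝ) ≤ t ^ 4 * (n ^ t / (5 * k ^ 2)) :=
    calc _ ≤ ∑ q, ((E₂ q).ncard : ℝ) := by exact_mod_cast Set.ncard_iUnion_le_of_fintype E₂
      _ ≤ _ := (Finset.sum_le_card_nsmul _ _ _ fun q _ => by
          simpa using SC.ncard_setOf_apply_pair_mem_collisions_le q.2.2 q.2.1).trans (by
        rw [Finset.card_univ, nsmul_eq_mul]; gcongr; exact_mod_cast hκ)
  have hlt := sq_mul_div_add_pow_four_mul_div_lt (N := n ^ t) (by positivity)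
    (show (20 * t ^ 2 : ℝ) ≤ k by exact_mod_cast hkt)
  obtain ⟨z, hz₁, hz₂⟩ := Set.nonempty_inter_compl_of_ncard_add_ncard_lt (s := ⋃ p, E₁ p)
    (t := ⋃ q, E₂ q) (by
      rw [Nat.card_fun, Nat.card_fin, Nat.card_eq_fintype_card]
      exact_mod_cast (add_le_add hE₁ hE₂).trans_lt hlt)
  simp only [Set.mem_compl_iff, Set.mem_iUnion, not_exists] at hz₁ hz₂
  refine ⟨z, fun a b => by simpa [E₁] using hz₁ (a, b), fun a b c d hac hτ => ?_⟩
  simpa [E₂, collisions] using hz₂ ⟨((a, b), (c, d)), hac, hτ⟩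

end StochasticConnector

theorem statement4_general {V : Type} [Fintype V] (G : SimpleGraph V)
    (k t : ℕ) (ht : 1 ≤ t) (hkt : 20 * t ^ 2 ≤ k)
    (hsc : Nonempty (StochasticConnector G k)) :
    HasMinor G (⊤ : SimpleGraph (Fin t)) := by
  obtain ⟨SC⟩ := hsc
  have : Nonempty V := ⟨SC.root ⟨0, by nlinarith⟩⟩
  obtain ⟨e⟩ : Nonempty (Sym2 (Fin t) ↪ Fin k) := Function.Embedding.nonempty_of_card_le <|
    calc Fintype.card (Sym2 (Fin t)) ≤ Fintype.card (Fin t × Fin t) :=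
          Fintype.card_le_of_surjective _ Sym2.mk_surjective
      _ ≤ Fintype.card (Fin k) := by simp only [Fintype.card_prod, Fintype.card_fin]; nlinarith
  obtain ⟨z, hzT, hzdisj⟩ := SC.exists_tuple_disjoint_rootPath (fun a b => e s(a, b)) hkt
  -- The trees of the diagonal pairs `s(a, a)` and `s(c, c)` differ, so `z a ≠ z c`.
  have hz : Function.Injective z := fun a c hac => by
    by_contra hne
    exact Set.disjoint_left.1 (hzdisj a a c c hne (e.injective.ne (by simpa using hne)))
      (SC.mem_rootPath_self (hzT a a)) (by rw [hac]; exact SC.mem_rootPath_self (hzT c c))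
  obtain ⟨seg, hseg, hpair⟩ := SC.exists_segments _ (fun a b => by rw [Sym2.eq_swap]) z hzT hz
  refine hasMinor_of_segments z seg (fun a b => (hseg a b).2.1) (fun a b => (hseg a b).2.2)
    (fun a b c d hac => ?_) fun a b hab => (hpair a b hab).exists_adj
  by_cases h : s(a, b) = s(c, d)
  · obtain ⟨rfl, rfl⟩ : c = b ∧ d = a := by
      rcases Sym2.eq_iff.1 h with h | h
      exacts [absurd h.1 hac, ⟨h.2.symm, h.1.symm⟩]
    exact (hpair _ _ hac).disjoint
  · exact (hzdisj a b c d hac (e.injective.ne h)).mono (hseg a b).1 (hseg c d).1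

/-- If a connected graph on `n` vertices admits a stochastic connector of size `k` and
`20t² ≤ k`, then it contains `K_t` as a minor. -/
theorem statement4 {V : Type} [Fintype V] (G : SimpleGraph V) (hG : G.Connected)
    (k t : ℕ) (ht : 1 ≤ t) (hkt : 20 * t ^ 2 ≤ k)
    (hsc : Nonempty (StochasticConnector G k)) :
    HasMinor G (⊤ : SimpleGraph (Fin t)) :=
  statement4_general G k t ht hkt hsc
end

section
/- Let G be a finite simple graph on n ≥ 1 vertices with a stochastic connector T_1,…,T_k rooted at r_1,…,r_k, let H be a graph with at most k edges, and fix an injection assigning to each edge e of H a distinct tree T_e of the connector. Choose, independently for each vertex x of H, a vertex φ(x) uniformly at random from V(G). Then with probability at least 2/5 both of the following hold: (a) for every edge uv of H, both φ(u) and φ(v) lie in V(T_{uv}); and (b) for any two edges e₁ = u₁v₁ and e₂ = u₂v₂ of H that share no endpoint, the unique path in T_{e₁} between φ(u₁) and φ(v₁) and the unique path in T_{e₂} between φ(u₂) and φ(v₂) are vertex-disjoint (these paths exist by (a)). -/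
/-!
Think of `φ` as a uniformly random map. Condition (a) fails only if some dart `(u, v)` of `H`
has `φ u` outside the tree of its edge; for a fixed dart this has probability at most
`1/(10k)`, and there are at most `2k` darts. If (b) fails, some vertex `x` lies on both tree
paths. In a tree the path between `a` and `b` is covered by the root paths to `a` and to `b`,
so `x` lies on the root paths towards `φ w₁` and `φ w₂` for endpoints `w₁ ≠ w₂` of the two
edges, in two distinct trees. By the collision bound this has probability at most `1/(5k²)`
for a fixed pair of darts, and as the event is symmetric it suffices to consider the at most
`2k²` pairs whose tree indices increase. So (a) and (b) fail with probability at most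
`1/5 + 2/5`.
-/

open SimpleGraph

/-- `x` lies on a (the unique, when `T` is a tree) path between `a` and `b` inside the
subgraph `T`. -/
def OnPathBetween {V : Type} {G : SimpleGraph V} (T : G.Subgraph) (a b x : V) : Prop :=
  ∃ (ha : a ∈ T.verts) (hb : b ∈ T.verts) (p : T.coe.Walk ⟨a, ha⟩ ⟨b, hb⟩),
    p.IsPath ∧ x ∈ p.support.map Subtype.val

open Finset

theorem SimpleGraph.IsAcyclic.support_subset_of_isPath {W : Type*} {G : SimpleGraph W}
    (hG : G.IsAcyclic) {r a b : W} {p : G.Walk a b} (hp : p.IsPath) (d : G.Walk r a)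
    (e : G.Walk r b) : p.support ⊆ d.support ++ e.support := by
  classical
  have hp' : p = (d.reverse.append e).bypass :=
    congrArg Subtype.val ((hG.subsingleton_path a b).elim ⟨p, hp⟩ ⟨_, Walk.bypass_isPath _⟩)
  intro x hx
  rw [hp'] at hx
  have hx' := (d.reverse.append e).support_bypass_subset_support hx
  rw [Walk.mem_support_append_iff, Walk.support_reverse, List.mem_reverse] at hx'
  exact List.mem_append.mpr hx'

theorem OnPathBetween.exists_onRootPath {V : Type} {G : SimpleGraph V} {T : G.Subgraph}
    (hT : T.coe.IsTree) (r : T.verts) {a b x : V} (h : OnPathBetween T a b x) :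
    (∃ ha : a ∈ T.verts, OnRootPath T r ⟨a, ha⟩ x) ∨
      ∃ hb : b ∈ T.verts, OnRootPath T r ⟨b, hb⟩ x := by
  obtain ⟨ha, hb, p, hp, hx⟩ := h
  obtain ⟨y, hy, rfl⟩ := List.mem_map.mp hx
  obtain ⟨d⟩ := hT.connected.preconnected r ⟨a, ha⟩
  obtain ⟨e⟩ := hT.connected.preconnected r ⟨b, hb⟩
  classical
  rcases List.mem_append.mp (hT.isAcyclic.support_subset_of_isPath hp d.bypass e.bypass hy)
    with hd | he
  · exact .inl ⟨ha, d.bypass, d.bypass_isPath, List.mem_map_of_mem hd⟩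
  · exact .inr ⟨hb, e.bypass, e.bypass_isPath, List.mem_map_of_mem he⟩

section Counting

variable {α β V : Type*} [Fintype α] [DecidableEq α] [Fintype V] [DecidableEq β]

theorem card_filter_restrict_mem_le (s : Finset α) {f : (s → V) → β}
    (hf : Function.Injective f) (S : Finset β) :
    #{φ : α → V | f (fun i => φ i) ∈ S} ≤ #S * Fintype.card V ^ (Fintype.card α - #s) :=
  calc #{φ : α → V | f (fun i => φ i) ∈ S}
      = #(({ψ : s → V | f ψ ∈ S} : Finset _) ×ˢ (univ : Finset ({i // i ∉ s} → V))) :=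
        card_equiv (Equiv.piEquivPiSubtypeProd (· ∈ s) fun _ => V) (by simp)
    _ = #{ψ : s → V | f ψ ∈ S} * Fintype.card V ^ (Fintype.card α - #s) := by
        rw [card_product, card_univ, Fintype.card_fun, Fintype.card_subtype_compl,
          Fintype.card_coe]
    _ ≤ #S * Fintype.card V ^ (Fintype.card α - #s) := by
        gcongr
        exact card_le_card_of_injOn f (fun ψ hψ => (mem_filter.mp hψ).2) hf.injOn

variable [DecidableEq V]

theorem card_filter_eval_mem_le (u : α) (S : Finset V) :
    #{φ : α → V | φ u ∈ S} ≤ #S * Fintype.card V ^ (Fintype.card α - 1) := by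
  have hf : Function.Injective fun ψ : ({u} : Finset α) → V => ψ ⟨u, mem_singleton_self u⟩ :=
    fun ψ ψ' h => funext fun ⟨i, hi⟩ => by obtain rfl := mem_singleton.mp hi; exact h
  simpa using card_filter_restrict_mem_le {u} hf S

theorem card_filter_eval₂_mem_le {u₁ u₂ : α} (hu : u₁ ≠ u₂) (S : Finset (V × V)) :
    #{φ : α → V | (φ u₁, φ u₂) ∈ S} ≤ #S * Fintype.card V ^ (Fintype.card α - 2) := by
  have hf : Function.Injective fun ψ : ({u₁, u₂} : Finset α) → V =>
      (ψ ⟨u₁, mem_insert_self u₁ _⟩, ψ ⟨u₂, mem_insert_of_mem (mem_singleton_self u₂)⟩) := by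
    intro ψ ψ' h
    simp only [Prod.mk.injEq] at h
    funext ⟨i, hi⟩
    rcases mem_insert.mp hi with rfl | hi
    · exact h.1
    · obtain rfl := mem_singleton.mp hi; exact h.2
  simpa [card_pair hu] using card_filter_restrict_mem_le {u₁, u₂} hf S

end Counting

theorem two_mul_card_filter_lt_le {X β : Type*} [Fintype X] [LinearOrder β] (f : X → β) :
    2 * #{q : X × X | f q.1 < f q.2} ≤ Fintype.card X ^ 2 := by
  classical
  set L := univ.filter fun q : X × X => f q.1 < f q.2
  set R := univ.filter fun q : X × X => f q.2 < f q.1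
  have hswap : #L = #R := card_equiv (Equiv.prodComm X X) (by simp [L, R])
  have hdisj : Disjoint L R := disjoint_filter.mpr fun _ _ h => h.asymm
  calc 2 * #L = #(L ∪ R) := by rw [card_union_of_disjoint hdisj, ← hswap, two_mul]
    _ ≤ Fintype.card X ^ 2 := by simpa [sq] using card_le_univ (L ∪ R)

def dartIndex {α : Type} {H : SimpleGraph α} {k : ℕ} (ι : H.edgeSet → Fin k) (d : H.Dart) :
    Fin k :=
  ι ⟨d.edge, d.edge_mem⟩

theorem dartIndex_symm {α : Type} {H : SimpleGraph α} {k : ℕ} (ι : H.edgeSet → Fin k)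
    (d : H.Dart) : dartIndex ι d.symm = dartIndex ι d :=
  congrArg ι (Subtype.ext d.edge_symm)

open scoped Classical in
theorem card_dart_le {α : Type} [Fintype α] {H : SimpleGraph α} {k : ℕ}
    {ι : H.edgeSet → Fin k} (hι : Function.Injective ι) : Fintype.card H.Dart ≤ 2 * k := by
  rw [H.dart_card_eq_twice_card_edges, H.edgeFinset_card]
  simpa using Nat.mul_le_mul_left 2 (Fintype.card_le_of_injective ι hι)

open scoped Classical in
theorem card_filter_dartIndex_lt_le {α : Type} [Fintype α] {H : SimpleGraph α} {k : ℕ}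
    {ι : H.edgeSet → Fin k} (hι : Function.Injective ι) :
    #{q : H.Dart × H.Dart | dartIndex ι q.1 < dartIndex ι q.2} ≤ 2 * k ^ 2 := by
  have h := two_mul_card_filter_lt_le (dartIndex ι)
  have := Nat.pow_le_pow_left (card_dart_le hι) 2
  nlinarith

namespace StochasticConnector

open scoped Classical

variable {V : Type} [Fintype V] {G : SimpleGraph V} {k : ℕ} (SC : StochasticConnector G k)

def OnRootPathTo (i : Fin k) (a x : V) : Prop :=
  ∃ ha : a ∈ (SC.T i).verts, OnRootPath (SC.T i) (SC.root i) ⟨a, ha⟩ x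

def RootPathsMeet (i j : Fin k) (a b : V) : Prop :=
  ∃ x, SC.OnRootPathTo i a x ∧ SC.OnRootPathTo j b x

theorem natCard_verts_le (i : Fin k) : Nat.card (SC.T i).verts ≤ Fintype.card V :=
  (Finite.card_subtype_le _).trans_eq Nat.card_eq_fintype_card

theorem card_verts_compl_le (i : Fin k) :
    (#(SC.T i).vertsᶜ.toFinset : ℝ) ≤ Fintype.card V / (10 * k) := by
  have hsplit := card_compl_add_card (SC.T i).verts.toFinset
  rw [← Nat.card_eq_card_toFinset, ← Set.toFinset_compl] at hsplit
  have hlarge := SC.large i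
  have hcard : (#(SC.T i).vertsᶜ.toFinset : ℝ) + Nat.card (SC.T i).verts = Fintype.card V := by
    exact_mod_cast hsplit
  linarith

theorem card_rootPathsMeet_le {i j : Fin k} (hij : i ≠ j) :
    (#{p : V × V | SC.RootPathsMeet i j p.1 p.2} : ℝ) ≤ Fintype.card V ^ 2 / (5 * k ^ 2) := by
  have hcoll : #{p : V × V | SC.RootPathsMeet i j p.1 p.2} ≤
      Nat.card {p : (SC.T i).verts × (SC.T j).verts |
        ∃ x : V, OnRootPath (SC.T i) (SC.root i) p.1 x ∧
          OnRootPath (SC.T j) (SC.root j) p.2 x} := by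
    rw [← Fintype.card_subtype, ← Nat.card_eq_fintype_card]
    refine Nat.card_le_card_of_injective
      (fun p => ⟨(⟨p.1.1, by obtain ⟨_, ⟨ha, _⟩, _⟩ := p.2; exact ha⟩,
        ⟨p.1.2, by obtain ⟨_, _, ⟨hb, _⟩⟩ := p.2; exact hb⟩),
        by obtain ⟨x, ⟨_, hx₁⟩, ⟨_, hx₂⟩⟩ := p.2; exact ⟨x, hx₁, hx₂⟩⟩) ?_
    intro p q hpq
    simp only [Subtype.mk.injEq, Prod.mk.injEq] at hpq
    exact Subtype.ext (Prod.ext hpq.1 hpq.2)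
  have hi : (Nat.card (SC.T i).verts : ℝ) ≤ Fintype.card V := mod_cast SC.natCard_verts_le i
  have hj : (Nat.card (SC.T j).verts : ℝ) ≤ Fintype.card V := mod_cast SC.natCard_verts_le j
  calc (#{p : V × V | SC.RootPathsMeet i j p.1 p.2} : ℝ)
      ≤ 1 / (5 * (k : ℝ) ^ 2) * Nat.card (SC.T i).verts * Nat.card (SC.T j).verts :=
        (Nat.cast_le.mpr hcoll).trans (SC.collision i j hij)
    _ ≤ 1 / (5 * (k : ℝ) ^ 2) * Fintype.card V * Fintype.card V := by gcongr
    _ = Fintype.card V ^ 2 / (5 * k ^ 2) := by ring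

variable {α : Type}

theorem card_eval_notMem_verts_le [Fintype α] (i : Fin k) (u : α) :
    (#{φ : α → V | φ u ∉ (SC.T i).verts} : ℝ) ≤
      Fintype.card V ^ Fintype.card α / (10 * k) := by
  have hα : 1 ≤ Fintype.card α := Fintype.card_pos_iff.mpr ⟨u⟩
  have hcount : #{φ : α → V | φ u ∉ (SC.T i).verts} ≤
      #(SC.T i).vertsᶜ.toFinset * Fintype.card V ^ (Fintype.card α - 1) := by
    simpa using card_filter_eval_mem_le u (SC.T i).vertsᶜ.toFinset
  calc (#{φ : α → V | φ u ∉ (SC.T i).verts} : ℝ)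
      ≤ #(SC.T i).vertsᶜ.toFinset * (Fintype.card V : ℝ) ^ (Fintype.card α - 1) := by
        exact_mod_cast hcount
    _ ≤ Fintype.card V / (10 * k) * (Fintype.card V : ℝ) ^ (Fintype.card α - 1) := by
        gcongr; exact SC.card_verts_compl_le i
    _ = Fintype.card V ^ Fintype.card α / (10 * k) := by
        rw [div_mul_eq_mul_div, ← pow_succ', Nat.sub_add_cancel hα]

theorem card_rootPathsMeet_eval_le [Fintype α] {i j : Fin k} (hij : i ≠ j) {u₁ u₂ : α}
    (hu : u₁ ≠ u₂) :
    (#{φ : α → V | SC.RootPathsMeet i j (φ u₁) (φ u₂)} : ℝ) ≤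
      Fintype.card V ^ Fintype.card α / (5 * k ^ 2) := by
  have hα : 2 ≤ Fintype.card α := Fintype.one_lt_card_iff_nontrivial.mpr ⟨u₁, u₂, hu⟩
  have hcount : #{φ : α → V | SC.RootPathsMeet i j (φ u₁) (φ u₂)} ≤
      #{p : V × V | SC.RootPathsMeet i j p.1 p.2} * Fintype.card V ^ (Fintype.card α - 2) := by
    simpa using card_filter_eval₂_mem_le hu {p : V × V | SC.RootPathsMeet i j p.1 p.2}
  calc (#{φ : α → V | SC.RootPathsMeet i j (φ u₁) (φ u₂)} : ℝ)
      ≤ #{p : V × V | SC.RootPathsMeet i j p.1 p.2} *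
          (Fintype.card V : ℝ) ^ (Fintype.card α - 2) := by
        exact_mod_cast hcount
    _ ≤ Fintype.card V ^ 2 / (5 * k ^ 2) * (Fintype.card V : ℝ) ^ (Fintype.card α - 2) := by
        gcongr; exact SC.card_rootPathsMeet_le hij
    _ = Fintype.card V ^ Fintype.card α / (5 * k ^ 2) := by
        rw [div_mul_eq_mul_div, ← pow_add, Nat.add_sub_cancel' hα]

variable {H : SimpleGraph α} (ι : H.edgeSet → Fin k)

def EdgesInTrees (φ : α → V) : Prop :=
  ∀ (u v : α) (h : H.Adj u v),
    φ u ∈ (SC.T (ι ⟨s(u, v), H.mem_edgeSet.mpr h⟩)).verts ∧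
    φ v ∈ (SC.T (ι ⟨s(u, v), H.mem_edgeSet.mpr h⟩)).verts

def PathsDisjoint (φ : α → V) : Prop :=
  ∀ (u₁ v₁ u₂ v₂ : α) (h₁ : H.Adj u₁ v₁) (h₂ : H.Adj u₂ v₂),
    ({u₁, v₁} : Set α) ∩ {u₂, v₂} = ∅ →
    ¬ ∃ x : V,
      OnPathBetween (SC.T (ι ⟨s(u₁, v₁), H.mem_edgeSet.mpr h₁⟩)) (φ u₁) (φ v₁) x ∧
      OnPathBetween (SC.T (ι ⟨s(u₂, v₂), H.mem_edgeSet.mpr h₂⟩)) (φ u₂) (φ v₂) x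

variable {ι}

theorem exists_dart_notMem_of_not_edgesInTrees {φ : α → V} (h : ¬ SC.EdgesInTrees ι φ) :
    ∃ d : H.Dart, φ d.fst ∉ (SC.T (dartIndex ι d)).verts := by
  unfold EdgesInTrees at h
  push Not at h
  obtain ⟨u, v, huv, hφ⟩ := h
  let d : H.Dart := ⟨(u, v), huv⟩
  by_cases hu : φ u ∈ (SC.T (dartIndex ι d)).verts
  · exact ⟨d.symm, by rw [dartIndex_symm]; exact hφ hu⟩
  · exact ⟨d, hu⟩

theorem exists_dart_onRootPathTo {u v : α} (huv : H.Adj u v) {φ : α → V} {x : V}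
    (h : OnPathBetween (SC.T (ι ⟨s(u, v), H.mem_edgeSet.mpr huv⟩)) (φ u) (φ v) x) :
    ∃ d : H.Dart, d.edge = s(u, v) ∧ SC.OnRootPathTo (dartIndex ι d) (φ d.fst) x := by
  let d : H.Dart := ⟨(u, v), huv⟩
  rcases h.exists_onRootPath (SC.tree _) (SC.root _) with h | h
  · exact ⟨d, rfl, h⟩
  · exact ⟨d.symm, Sym2.eq_swap, by rw [dartIndex_symm]; exact h⟩

theorem exists_rootPathsMeet_of_not_pathsDisjoint
    (hι : Function.Injective ι) {φ : α → V} (h : ¬ SC.PathsDisjoint ι φ) :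
    ∃ d₁ d₂ : H.Dart, dartIndex ι d₁ < dartIndex ι d₂ ∧ d₁.fst ≠ d₂.fst ∧
      SC.RootPathsMeet (dartIndex ι d₁) (dartIndex ι d₂) (φ d₁.fst) (φ d₂.fst) := by
  unfold PathsDisjoint at h
  push Not at h
  obtain ⟨u₁, v₁, u₂, v₂, h₁, h₂, hdisj, x, hx₁, hx₂⟩ := h
  obtain ⟨d₁, he₁, hd₁⟩ := SC.exists_dart_onRootPathTo h₁ hx₁
  obtain ⟨d₂, he₂, hd₂⟩ := SC.exists_dart_onRootPathTo h₂ hx₂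
  have hsep : d₁.fst ∉ d₂.edge := by
    intro hw
    have hw₁ : d₁.fst ∈ d₁.edge := Sym2.mem_mk_left _ _
    rw [he₁, Sym2.mem_iff] at hw₁
    rw [he₂, Sym2.mem_iff] at hw
    exact (hdisj ▸ ⟨hw₁, hw⟩ : d₁.fst ∈ (∅ : Set α))
  have hfst : d₁.fst ≠ d₂.fst := fun h => hsep (h ▸ Sym2.mem_mk_left _ _)
  have hne : dartIndex ι d₁ ≠ dartIndex ι d₂ := fun h =>
    hsep (Subtype.mk.inj (hι h) ▸ Sym2.mem_mk_left _ _)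
  rcases hne.lt_or_gt with hlt | hgt
  · exact ⟨d₁, d₂, hlt, hfst, x, hd₁, hd₂⟩
  · exact ⟨d₂, d₁, hgt, hfst.symm, x, hd₂, hd₁⟩

theorem card_not_edgesInTrees_and_pathsDisjoint_le_sum [Fintype α]
    (hι : Function.Injective ι) :
    #{φ : α → V | ¬ (SC.EdgesInTrees ι φ ∧ SC.PathsDisjoint ι φ)} ≤
      ∑ d : H.Dart, #{φ : α → V | φ d.fst ∉ (SC.T (dartIndex ι d)).verts} +
      ∑ q ∈ {q : H.Dart × H.Dart | dartIndex ι q.1 < dartIndex ι q.2 ∧ q.1.fst ≠ q.2.fst},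
        #{φ : α → V |
          SC.RootPathsMeet (dartIndex ι q.1) (dartIndex ι q.2) (φ q.1.fst) (φ q.2.fst)} := by
  refine (card_le_card ?_).trans
    ((card_union_le _ _).trans (add_le_add card_biUnion_le card_biUnion_le))
  intro φ hφ
  simp only [mem_filter, mem_univ, true_and, mem_union, mem_biUnion] at hφ ⊢
  rcases not_and_or.mp hφ with h | h
  · exact .inl (SC.exists_dart_notMem_of_not_edgesInTrees h)
  · obtain ⟨d₁, d₂, hlt, hfst, hmeet⟩ :=
      SC.exists_rootPathsMeet_of_not_pathsDisjoint hι h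
    exact .inr ⟨(d₁, d₂), ⟨hlt, hfst⟩, hmeet⟩

theorem card_not_edgesInTrees_and_pathsDisjoint_le [Fintype α] (hι : Function.Injective ι) :
    (#{φ : α → V | ¬ (SC.EdgesInTrees ι φ ∧ SC.PathsDisjoint ι φ)} : ℝ) ≤
      3 / 5 * Fintype.card V ^ Fintype.card α := by
  set N : ℝ := Fintype.card V ^ Fintype.card α
  set pairs := ({q : H.Dart × H.Dart | dartIndex ι q.1 < dartIndex ι q.2 ∧ q.1.fst ≠ q.2.fst} :
    Finset _)
  have hA : ∑ d : H.Dart, (#{φ : α → V | φ d.fst ∉ (SC.T (dartIndex ι d)).verts} : ℝ) ≤ N / 5 :=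
    calc _ ≤ ∑ _d : H.Dart, N / (10 * k) :=
          sum_le_sum fun _ _ => SC.card_eval_notMem_verts_le _ _
      _ = Fintype.card H.Dart * (N / (10 * k)) := by rw [sum_const, card_univ, nsmul_eq_mul]
      _ ≤ 2 * k * (N / (10 * k)) := by gcongr; exact_mod_cast card_dart_le hι
      _ ≤ N / 5 := by
          rcases eq_or_ne (k : ℝ) 0 with hk | hk
          · simp [hk]; positivity
          · field_simp; linarith
  have hB : ∑ q ∈ pairs, (#{φ : α → V |
      SC.RootPathsMeet (dartIndex ι q.1) (dartIndex ι q.2) (φ q.1.fst) (φ q.2.fst)} : ℝ) ≤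
      2 * N / 5 :=
    calc _ ≤ ∑ _q ∈ pairs, N / (5 * k ^ 2) := sum_le_sum fun q hq =>
          SC.card_rootPathsMeet_eval_le (mem_filter.mp hq).2.1.ne (mem_filter.mp hq).2.2
      _ = #pairs * (N / (5 * k ^ 2)) := by rw [sum_const, nsmul_eq_mul]
      _ ≤ 2 * k ^ 2 * (N / (5 * k ^ 2)) := by
          gcongr
          have hsub : pairs ⊆
              univ.filter fun q : H.Dart × H.Dart => dartIndex ι q.1 < dartIndex ι q.2 :=
            fun q hq => mem_filter.mpr ⟨mem_univ _, (mem_filter.mp hq).2.1⟩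
          exact_mod_cast (card_le_card hsub).trans (card_filter_dartIndex_lt_le hι)
      _ ≤ 2 * N / 5 := by
          rcases eq_or_ne (k : ℝ) 0 with hk | hk
          · simp [hk]; positivity
          · field_simp; linarith
  calc _ ≤ ∑ d : H.Dart, (#{φ : α → V | φ d.fst ∉ (SC.T (dartIndex ι d)).verts} : ℝ) +
        ∑ q ∈ pairs, (#{φ : α → V |
          SC.RootPathsMeet (dartIndex ι q.1) (dartIndex ι q.2) (φ q.1.fst) (φ q.2.fst)} : ℝ) := by
        exact_mod_cast SC.card_not_edgesInTrees_and_pathsDisjoint_le_sum hι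
    _ ≤ 3 / 5 * N := by linarith

end StochasticConnector

theorem statement5_general {V α : Type} [Fintype V] [Fintype α] (G : SimpleGraph V)
    (k : ℕ) (SC : StochasticConnector G k)
    (H : SimpleGraph α) (ι : H.edgeSet → Fin k) (hι : Function.Injective ι) :
    (2 : ℝ) / 5 * (Fintype.card V : ℝ) ^ Fintype.card α ≤
      Nat.card {φ : α → V //
        (∀ (u v : α) (h : H.Adj u v),
          φ u ∈ (SC.T (ι ⟨s(u, v), H.mem_edgeSet.mpr h⟩)).verts ∧
          φ v ∈ (SC.T (ι ⟨s(u, v), H.mem_edgeSet.mpr h⟩)).verts) ∧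
        (∀ (u₁ v₁ u₂ v₂ : α) (h₁ : H.Adj u₁ v₁) (h₂ : H.Adj u₂ v₂),
          ({u₁, v₁} : Set α) ∩ {u₂, v₂} = ∅ →
          ¬ ∃ x : V,
            OnPathBetween (SC.T (ι ⟨s(u₁, v₁), H.mem_edgeSet.mpr h₁⟩)) (φ u₁) (φ v₁) x ∧
            OnPathBetween (SC.T (ι ⟨s(u₂, v₂), H.mem_edgeSet.mpr h₂⟩)) (φ u₂) (φ v₂) x)} := by
  classical
  change _ ≤ ((Nat.card {φ // SC.EdgesInTrees ι φ ∧ SC.PathsDisjoint ι φ} : ℕ) : ℝ)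
  have htotal := card_filter_add_card_filter_not (s := univ)
    fun φ : α → V => SC.EdgesInTrees ι φ ∧ SC.PathsDisjoint ι φ
  rw [card_univ, Fintype.card_fun] at htotal
  have hbad := SC.card_not_edgesInTrees_and_pathsDisjoint_le hι
  rw [Nat.card_eq_fintype_card, Fintype.card_subtype]
  have htotal' := congrArg (Nat.cast : ℕ → ℝ) htotal
  push_cast at htotal'
  linarith

/-- Given a stochastic connector `T_1, …, T_k` of `G`, a graph `H` with at most `k` edges
and an injection assigning a distinct tree to each edge of `H`, if each vertex of `H` is
mapped independently and uniformly at random to a vertex of `G`, then with probability at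
least `2/5`: (a) for every edge `uv` of `H` both images lie in the assigned tree, and
(b) for any two edges sharing no endpoint, the corresponding tree paths between the images
of their endpoints are vertex-disjoint. (Probability is expressed by counting the maps
`φ : V(H) → V(G)` with the desired property.) -/
theorem statement5 {V α : Type} [Fintype V] [Fintype α] (G : SimpleGraph V)
    (hn : 1 ≤ Fintype.card V) (k : ℕ) (SC : StochasticConnector G k)
    (H : SimpleGraph α) (ι : H.edgeSet → Fin k) (hι : Function.Injective ι) :
    (2 : ℝ) / 5 * (Fintype.card V : ℝ) ^ Fintype.card α ≤
      Nat.card {φ : α → V //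
        (∀ (u v : α) (h : H.Adj u v),
          φ u ∈ (SC.T (ι ⟨s(u, v), H.mem_edgeSet.mpr h⟩)).verts ∧
          φ v ∈ (SC.T (ι ⟨s(u, v), H.mem_edgeSet.mpr h⟩)).verts) ∧
        (∀ (u₁ v₁ u₂ v₂ : α) (h₁ : H.Adj u₁ v₁) (h₂ : H.Adj u₂ v₂),
          ({u₁, v₁} : Set α) ∩ {u₂, v₂} = ∅ →
          ¬ ∃ x : V,
            OnPathBetween (SC.T (ι ⟨s(u₁, v₁), H.mem_edgeSet.mpr h₁⟩)) (φ u₁) (φ v₁) x ∧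
            OnPathBetween (SC.T (ι ⟨s(u₂, v₂), H.mem_edgeSet.mpr h₂⟩)) (φ u₂) (φ v₂) x)} :=
  statement5_general G k SC H ι hι
end

section
/- For every positive integer d, every finite simple graph with at least one vertex, at most 1.02·d vertices, and minimum degree at least 0.94·d contains K_{⌊√d/10⌋} as a minor. -/
open SimpleGraph

/-!
Take any `t = ⌊√d/10⌋` vertices `x i` as centres. Any two vertices have at least
`2δ - n ≥ 0.86 d ≥ t²` common neighbours, so by Hall's theorem each of the `t² - t` ordered
pairs `(i, j)` of distinct centres gets its own common neighbour outside the centres. The branch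
set of `i` is `x i` together with the neighbours chosen for the pairs `(i, j)`: a star around
`x i`, joined to the branch set of `j` by the edge from the neighbour of `(i, j)` to `x j`.
-/

open Finset

theorem Finset.exists_injective_forall_mem_of_card_le {ι α : Type*} [Fintype ι] [DecidableEq α]
    (t : ι → Finset α) (h : ∀ i, Fintype.card ι ≤ #(t i)) :
    ∃ f : ι → α, Function.Injective f ∧ ∀ i, f i ∈ t i := by
  refine (all_card_le_biUnion_card_iff_exists_injective t).mp fun s => ?_
  obtain rfl | ⟨i, hi⟩ := s.eq_empty_or_nonempty
  · simp
  · calc #s ≤ Fintype.card ι := card_le_univ s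
      _ ≤ #(t i) := h i
      _ ≤ #(s.biUnion t) := card_le_card (subset_biUnion_of_mem t hi)

theorem Fintype.card_subtype_fst_ne_snd (ι : Type*) [Fintype ι] [DecidableEq ι] :
    Fintype.card {p : ι × ι // p.1 ≠ p.2} = Fintype.card ι ^ 2 - Fintype.card ι := by
  rw [Fintype.card_subtype, ← card_univ, sq, ← offDiag_card]
  congr 1
  ext p
  simp

namespace SimpleGraph

variable {V : Type} (G : SimpleGraph V)

theorem induce_insert_connected_of_forall_adj {a : V} {s : Set V} (h : ∀ v ∈ s, G.Adj a v) :
    (G.induce (insert a s)).Connected := by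
  rw [connected_iff_exists_forall_reachable]
  refine ⟨⟨a, s.mem_insert a⟩, ?_⟩
  rintro ⟨v, rfl | hv⟩
  · rfl
  · exact Adj.reachable (by simpa using h v hv)

theorem degree_add_degree_le_card_inter_add_card [Fintype V] [DecidableEq V] [DecidableRel G.Adj]
    (u v : V) :
    G.degree u + G.degree v ≤ #(G.neighborFinset u ∩ G.neighborFinset v) + Fintype.card V := by
  rw [← card_neighborFinset_eq_degree, ← card_neighborFinset_eq_degree,
    ← card_inter_add_card_union]
  exact Nat.add_le_add_left (card_le_univ _) _

theorem hasMinor_top_of_injective_commonNeighbors {ι : Type} (x : ι ↪ V)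
    (f : {p : ι × ι // p.1 ≠ p.2} → V) (hf : Function.Injective f) (hfx : ∀ p i, f p ≠ x i)
    (hadj : ∀ p, f p ∈ G.commonNeighbors (x p.1.1) (x p.1.2)) :
    HasMinor G (⊤ : SimpleGraph ι) := by
  refine ⟨fun i => insert (x i) (f '' {p | p.1.1 = i}), fun i => ?_, fun i j hij => ?_,
    fun i j hij => ?_⟩
  · refine G.induce_insert_connected_of_forall_adj ?_
    rintro _ ⟨p, rfl, rfl⟩
    exact (hadj p).1
  · refine Set.disjoint_left.mpr ?_
    rintro _ (rfl | ⟨p, rfl, rfl⟩) (h | ⟨q, hq, h⟩)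
    · exact hij (x.injective h)
    · exact hfx q _ h
    · exact hfx p j h
    · exact hij (hq ▸ congrArg (fun r => r.1.1) (hf h).symm)
  · exact ⟨f ⟨(i, j), hij⟩, Set.mem_insert_of_mem _ ⟨_, rfl, rfl⟩, x j, Set.mem_insert _ _,
      (hadj ⟨(i, j), hij⟩).2.symm⟩

theorem exists_injective_commonNeighbors [Fintype V] [DecidableEq V] [DecidableRel G.Adj]
    {ι : Type*} [Fintype ι] [DecidableEq ι] (x : ι ↪ V)
    (h : ∀ i j, i ≠ j →
      Fintype.card ι ^ 2 ≤ #(G.neighborFinset (x i) ∩ G.neighborFinset (x j))) :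
    ∃ f : {p : ι × ι // p.1 ≠ p.2} → V, Function.Injective f ∧ (∀ p i, f p ≠ x i) ∧
      ∀ p, f p ∈ G.commonNeighbors (x p.1.1) (x p.1.2) := by
  obtain ⟨f, hf, hmem⟩ := exists_injective_forall_mem_of_card_le
    (fun p : {p : ι × ι // p.1 ≠ p.2} =>
      (G.neighborFinset (x p.1.1) ∩ G.neighborFinset (x p.1.2)) \ univ.map x) fun p => by
    rw [Fintype.card_subtype_fst_ne_snd]
    calc Fintype.card ι ^ 2 - Fintype.card ι
        ≤ #(G.neighborFinset (x p.1.1) ∩ G.neighborFinset (x p.1.2)) - #(univ.map x) := by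
          rw [card_map, card_univ]
          exact Nat.sub_le_sub_right (h _ _ p.2) _
      _ ≤ _ := le_card_sdiff _ _
  refine ⟨f, hf, fun p i hpi => ?_, fun p => ?_⟩
  · exact (mem_sdiff.mp (hmem p)).2 (hpi ▸ mem_map_of_mem x (mem_univ i))
  · simpa [mem_commonNeighbors] using (mem_sdiff.mp (hmem p)).1

theorem hasMinor_top_of_card_sq_add_card_le_two_mul_minDegree [Fintype V] [Nonempty V]
    [DecidableRel G.Adj] {ι : Type} [Fintype ι]
    (h : Fintype.card ι ^ 2 + Fintype.card V ≤ 2 * G.minDegree) :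
    HasMinor G (⊤ : SimpleGraph ι) := by
  classical
  obtain ⟨v, hv⟩ := G.exists_minimal_degree_vertex
  have hk : Fintype.card ι ≤ Fintype.card V := by
    have := G.degree_lt_card_verts v
    nlinarith [Nat.le_self_pow two_ne_zero (Fintype.card ι)]
  obtain ⟨x⟩ := Function.Embedding.nonempty_of_card_le hk
  obtain ⟨f, hf, hfx, hadj⟩ := G.exists_injective_commonNeighbors x fun i j _ => by
    have := G.degree_add_degree_le_card_inter_add_card (x i) (x j)
    have := G.minDegree_le_degree (x i)
    have := G.minDegree_le_degree (x j)
    omega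
  exact G.hasMinor_top_of_injective_commonNeighbors x f hf hfx hadj

end SimpleGraph

theorem statement9_general (d : ℕ) {V : Type} [Fintype V] (G : SimpleGraph V)
    (hn : 1 ≤ Fintype.card V)
    (hcard : (Fintype.card V : ℝ) ≤ 1.02 * d)
    (hdeg : ∀ v : V, (0.94 : ℝ) * d ≤ Nat.card (G.neighborSet v)) :
    HasMinor G (⊤ : SimpleGraph (Fin ⌊Real.sqrt d / 10⌋₊)) := by
  classical
  have : Nonempty V := Fintype.card_pos_iff.mp hn
  set t := ⌊Real.sqrt d / 10⌋₊
  have ht : (t : ℝ) ^ 2 ≤ (d : ℝ) / 100 := by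
    calc (t : ℝ) ^ 2 ≤ (Real.sqrt d / 10) ^ 2 := by
          gcongr; exact Nat.floor_le (by positivity)
      _ = (d : ℝ) / 100 := by rw [div_pow, Real.sq_sqrt (by positivity)]; norm_num
  have hδ : (0.94 : ℝ) * d ≤ G.minDegree := by
    obtain ⟨v, hv⟩ := G.exists_minimal_degree_vertex
    rw [hv, ← card_neighborSet_eq_degree, ← Nat.card_eq_fintype_card]
    exact hdeg v
  apply G.hasMinor_top_of_card_sq_add_card_le_two_mul_minDegree
  rw [Fintype.card_fin]
  exact_mod_cast (by linarith : (t : ℝ) ^ 2 + Fintype.card V ≤ 2 * G.minDegree)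

/-- For every positive integer `d`, every finite simple graph with at least one vertex,
at most `1.02·d` vertices, and minimum degree at least `0.94·d` contains `K_{⌊√d/10⌋}`
as a minor. -/
theorem statement9 (d : ℕ) (hd : 1 ≤ d) {V : Type} [Fintype V] (G : SimpleGraph V)
    (hn : 1 ≤ Fintype.card V)
    (hcard : (Fintype.card V : ℝ) ≤ 1.02 * d)
    (hdeg : ∀ v : V, (0.94 : ℝ) * d ≤ Nat.card (G.neighborSet v)) :
    HasMinor G (⊤ : SimpleGraph (Fin ⌊Real.sqrt d / 10⌋₊)) :=
  statement9_general d G hn hcard hdeg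
end

section
/- Let Δ ≥ 1 and h ≥ 3 be integers, and let ⟨G,w⟩ be a connected finite simple graph with positive integer vertex weights satisfying w(v) ≤ Δ for every vertex v. If G contains two vertices at vertex-weighted distance at least 3h²Δ, then G contains h vertices that are pairwise at vertex-weighted distance at least 2(h+2)Δ + 2. -/
/-!
Take a shortest `u`–`v` walk; it has weight at least `3h²Δ`. Walking along it, pick for each
`i < h` a vertex `aᵢ` with `iD + 1 ≤ d(u, aᵢ) ≤ iD + w(aᵢ)`, where `D = 2(h+2)Δ + 1`; there is
room for this because `(h-1)D + 1 ≤ 3h²Δ`. The weighted triangle inequality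
`d(u, y) + w(x) ≤ d(u, x) + d(x, y)` counts `x` on both sides, so the weight of `aᵢ` cancels and
`d(aᵢ, aⱼ) ≥ (j - i)D + 1` for `i < j`. Distinct indices give distinct vertices because
`d(x, x) ≤ w(x) ≤ Δ`.
-/

open SimpleGraph

/-- The vertex-weighted distance in `⟨G, w⟩`: the minimum, over walks from `u` to `v`,
of the sum of the weights of the vertices of the walk. -/
noncomputable def wdist {V : Type} (G : SimpleGraph V) (w : V → ℕ) (u v : V) : ℕ :=
  sInf {n | ∃ p : G.Walk u v, (p.support.map w).sum = n}

namespace SimpleGraph.Walk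

variable {V : Type*} {G : SimpleGraph V} (w : V → ℕ)

def weightedLength {u v : V} (p : G.Walk u v) : ℕ :=
  (p.support.map w).sum

@[simp]
lemma weightedLength_nil (u : V) : (nil : G.Walk u u).weightedLength w = w u := by
  simp [weightedLength]

@[simp]
lemma weightedLength_cons {u v x : V} (h : G.Adj u v) (p : G.Walk v x) :
    (cons h p).weightedLength w = w u + p.weightedLength w := by
  simp [weightedLength]

lemma weightedLength_reverse {u v : V} (p : G.Walk u v) :
    p.reverse.weightedLength w = p.weightedLength w := by
  simp [weightedLength, support_reverse, List.sum_reverse]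

lemma weightedLength_append_add {u v x : V} (p : G.Walk u v) (q : G.Walk v x) :
    (p.append q).weightedLength w + w v = p.weightedLength w + q.weightedLength w := by
  induction p with
  | nil => simp only [nil_append, weightedLength_nil]; omega
  | cons h p ih =>
    have := ih q
    simp only [cons_append, weightedLength_cons]
    omega

lemma exists_append_eq_weightedLength_le_lt {u v : V} (p : G.Walk u v) {t : ℕ} (ht : 0 < t)
    (htp : t ≤ p.weightedLength w) :
    ∃ (x : V) (q : G.Walk u x) (r : G.Walk x v),
      q.append r = p ∧ t ≤ q.weightedLength w ∧ q.weightedLength w < t + w x := by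
  induction p generalizing t with
  | nil => exact ⟨_, nil, nil, rfl, by simpa using htp, by simpa using ht⟩
  | @cons a b c hab p ih =>
    rw [weightedLength_cons] at htp
    by_cases hta : t ≤ w a
    · exact ⟨a, nil, cons hab p, rfl, by simpa using hta, by simpa using ht⟩
    · obtain ⟨x, q, r, rfl, hq_ge, hq_lt⟩ := ih (t := t - w a) (by omega) (by omega)
      exact ⟨x, cons hab q, r, rfl, by simp only [weightedLength_cons]; omega,
        by simp only [weightedLength_cons]; omega⟩

end SimpleGraph.Walk

section wdist

variable {V : Type} {G : SimpleGraph V} {w : V → ℕ} {u v x y : V}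

lemma wdist_le_weightedLength (p : G.Walk u v) : wdist G w u v ≤ p.weightedLength w :=
  Nat.sInf_le ⟨p, rfl⟩

lemma SimpleGraph.Reachable.exists_weightedLength_eq_wdist (h : G.Reachable u v) :
    ∃ p : G.Walk u v, p.weightedLength w = wdist G w u v := by
  obtain ⟨p⟩ := h
  exact Nat.sInf_mem (s := {n | ∃ p : G.Walk u v, p.weightedLength w = n}) ⟨_, p, rfl⟩

lemma wdist_comm : wdist G w u v = wdist G w v u := by
  unfold wdist
  congr 1
  ext n
  exact ⟨fun ⟨p, hp⟩ => ⟨p.reverse, (p.weightedLength_reverse w).trans hp⟩,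
    fun ⟨p, hp⟩ => ⟨p.reverse, (p.weightedLength_reverse w).trans hp⟩⟩

lemma wdist_self_le (u : V) : wdist G w u u ≤ w u := by
  simpa using wdist_le_weightedLength (w := w) (Walk.nil : G.Walk u u)

lemma wdist_add_le (hux : G.Reachable u x) (hxv : G.Reachable x v) :
    wdist G w u v + w x ≤ wdist G w u x + wdist G w x v := by
  obtain ⟨q, hq⟩ := hux.exists_weightedLength_eq_wdist (w := w)
  obtain ⟨r, hr⟩ := hxv.exists_weightedLength_eq_wdist (w := w)
  have hqr := Walk.weightedLength_append_add w q r
  have := wdist_le_weightedLength (w := w) (q.append r)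
  omega

lemma SimpleGraph.Reachable.exists_le_wdist_lt (h : G.Reachable u v) {t : ℕ} (ht : 0 < t)
    (htd : t ≤ wdist G w u v) : ∃ x, t ≤ wdist G w u x ∧ wdist G w u x < t + w x := by
  obtain ⟨p, hp⟩ := h.exists_weightedLength_eq_wdist (w := w)
  obtain ⟨x, q, r, rfl, hq_ge, hq_lt⟩ :=
    p.exists_append_eq_weightedLength_le_lt w ht (hp ▸ htd)
  have hqr := Walk.weightedLength_append_add w q r
  have hq := wdist_le_weightedLength (w := w) q
  have hr := wdist_le_weightedLength (w := w) r
  have htri := wdist_add_le (w := w) q.reachable r.reachable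
  exact ⟨x, by omega, by omega⟩

lemma lt_wdist_of_wdist_lt_of_le_wdist (hux : G.Reachable u x) (hxy : G.Reachable x y)
    {s D : ℕ} (hx : wdist G w u x < s + w x) (hy : s + D ≤ wdist G w u y) :
    D < wdist G w x y := by
  have := wdist_add_le (w := w) hux hxy
  omega

end wdist

lemma mul_spacing_add_one_le_three_mul_sq_mul {Δ h i : ℕ} (hΔ : 1 ≤ Δ) (hi : i < h) :
    i * (2 * (h + 2) * Δ + 1) + 1 ≤ 3 * h ^ 2 * Δ := by
  obtain ⟨k, rfl⟩ : ∃ k, h = i + 1 + k := ⟨h - i - 1, by omega⟩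
  nlinarith [Nat.mul_le_mul_right (i * i + 4 * i * k + 3 * k * k + 6 * k + 3) hΔ]

theorem statement12_general (Δ h : ℕ) (hΔ : 1 ≤ Δ) {V : Type}
    (G : SimpleGraph V) (hG : G.Connected) (w : V → ℕ)
    (hwΔ : ∀ v, w v ≤ Δ)
    (hfar : ∃ u v : V, 3 * h ^ 2 * Δ ≤ wdist G w u v) :
    ∃ a : Fin h → V, Function.Injective a ∧
      ∀ i j : Fin h, i ≠ j → 2 * (h + 2) * Δ + 2 ≤ wdist G w (a i) (a j) := by
  obtain ⟨u, v, huv⟩ := hfar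
  set D := 2 * (h + 2) * Δ + 1 with hD
  have hpoint (i : Fin h) : ∃ x, i * D + 1 ≤ wdist G w u x ∧ wdist G w u x < i * D + 1 + w x :=
    (hG.preconnected u v).exists_le_wdist_lt (by omega)
      ((mul_spacing_add_one_le_three_mul_sq_mul hΔ i.isLt).trans huv)
  choose a ha_ge ha_lt using hpoint
  have hsep_lt {i j : Fin h} (hij : i < j) : D < wdist G w (a i) (a j) := by
    refine lt_wdist_of_wdist_lt_of_le_wdist (hG.preconnected _ _) (hG.preconnected _ _)
      (ha_lt i) (le_trans ?_ (ha_ge j))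
    have := Nat.mul_le_mul_right D (Nat.succ_le_of_lt hij)
    rw [Nat.succ_mul] at this
    omega
  have hsep {i j : Fin h} (hij : i ≠ j) : D < wdist G w (a i) (a j) := by
    rcases hij.lt_or_gt with hij | hij
    · exact hsep_lt hij
    · exact wdist_comm ▸ hsep_lt hij
  refine ⟨a, fun i j haij => by_contra fun hij => ?_, fun i j hij => hsep hij⟩
  have hlt := haij ▸ hsep hij
  have hΔD : Δ < D := by rw [hD]; nlinarith
  linarith [wdist_self_le (G := G) (w := w) (a j), hwΔ (a j)]

/-- Let `Δ ≥ 1`, `h ≥ 3`, and let `⟨G, w⟩` be a connected finite simple graph with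
positive integer vertex weights, all at most `Δ`. If `G` contains two vertices at
vertex-weighted distance at least `3h²Δ`, then `G` contains `h` vertices that are
pairwise at vertex-weighted distance at least `2(h+2)Δ + 2`. -/
theorem statement12 (Δ h : ℕ) (hΔ : 1 ≤ Δ) (hh : 3 ≤ h) {V : Type} [Fintype V]
    (G : SimpleGraph V) (hG : G.Connected) (w : V → ℕ)
    (hw : ∀ v, 0 < w v) (hwΔ : ∀ v, w v ≤ Δ)
    (hfar : ∃ u v : V, 3 * h ^ 2 * Δ ≤ wdist G w u v) :
    ∃ a : Fin h → V, Function.Injective a ∧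
      ∀ i j : Fin h, i ≠ j → 2 * (h + 2) * Δ + 2 ≤ wdist G w (a i) (a j) :=
  statement12_general Δ h hΔ G hG w hwΔ hfar
end

section
/- Let G be a finite simple graph on n vertices, let δ ∈ (0,1) be a real number, and let s ≥ 0 be a real number. If every induced subgraph H of G has a (1−δ)-balanced separator of size at most s (that is, a set S_H ⊆ V(H) with |S_H| ≤ s such that every connected component of H − S_H has at most (1−δ)·|V(H)| vertices), then G has a 2/3-balanced separator of size at most ⌈1/δ⌉ · s. -/
/-!
Refine a separator greedily. Keep a set `S` of size at most `k · s` such that every component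
of `G - S` has at most `max ((1 - δ)^k, 2/3) · n` vertices. If some component `C` of `G - S` has
more than `2n/3` vertices, adding a `(1 - δ)`-balanced separator of `G[C]` shrinks the
components inside `C` by the factor `1 - δ`, while every other component has at most
`n - |C| < n/3` vertices. After `⌈1/δ⌉` rounds, `(1 - δ)^⌈1/δ⌉ ≤ e⁻¹ < 2/3`.
-/

open SimpleGraph

/-- `S` is an `α`-balanced separator of `G`: every connected component of `G - S`
has at most `α · |V(G)|` vertices. -/
def IsBalSep {V : Type} (G : SimpleGraph V) (α : ℝ) (S : Set V) : Prop :=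
  ∀ c : (G.induce Sᶜ).ConnectedComponent, (Nat.card c.supp : ℝ) ≤ α * Nat.card V

namespace SimpleGraph

variable {V W : Type*} {G : SimpleGraph V} {H : SimpleGraph W}

lemma ConnectedComponent.card_supp_le_card_supp_map [Finite W] (f : G →g H)
    (hf : Function.Injective f) (c : G.ConnectedComponent) :
    Nat.card c.supp ≤ Nat.card (c.map f).supp :=
  Nat.card_le_card_of_injective
    (fun w => ⟨f w, by rw [ConnectedComponent.mem_supp_iff, ← ConnectedComponent.map_mk,
      (ConnectedComponent.mem_supp_iff _ _).1 w.2]⟩)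
    (fun _ _ h => Subtype.ext (hf (congrArg Subtype.val h)))

lemma Connected.exists_card_le_card_supp [Finite W] (hG : G.Connected) (f : G →g H)
    (hf : Function.Injective f) : ∃ d : H.ConnectedComponent, Nat.card V ≤ Nat.card d.supp := by
  obtain ⟨v⟩ := hG.nonempty
  exact ⟨H.connectedComponentMk (f v), Nat.card_le_card_of_injective
    (fun w => ⟨f w, ConnectedComponent.sound ((hG.preconnected v w).map f).symm⟩)
    (fun _ _ h => hf (congrArg Subtype.val h))⟩

lemma ConnectedComponent.card_supp_add_card_supp_le [Finite V] {c d : G.ConnectedComponent}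
    (h : c ≠ d) : Nat.card c.supp + Nat.card d.supp ≤ Nat.card V := by
  rw [Nat.card_coe_set_eq, Nat.card_coe_set_eq,
    ← Set.ncard_union_eq (G.pairwise_disjoint_supp_connectedComponent h)]
  exact Set.ncard_le_card _

end SimpleGraph

section BalancedSeparator

variable {V : Type} {G : SimpleGraph V}

lemma IsBalSep.mono {α β : ℝ} {S : Set V} (h : IsBalSep G α S) (hαβ : α ≤ β) :
    IsBalSep G β S :=
  fun c => (h c).trans (mul_le_mul_of_nonneg_right hαβ (Nat.cast_nonneg _))

lemma isBalSep_one [Finite V] (G : SimpleGraph V) (S : Set V) : IsBalSep G 1 S := fun c => by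
  rw [one_mul, Nat.cast_le]
  exact (Finite.card_subtype_le _).trans (Finite.card_subtype_le _)

lemma card_supp_union_separator_le [Finite V] {β : ℝ} {S : Set V}
    (C : (G.induce Sᶜ).ConnectedComponent) {SH : Set (Subtype.val '' C.supp)}
    (hSH : IsBalSep (G.induce (Subtype.val '' C.supp)) β SH)
    (c : (G.induce (S ∪ Subtype.val '' SH)ᶜ).ConnectedComponent) :
    (Nat.card c.supp : ℝ) ≤ β * Nat.card C.supp ∨
      Nat.card c.supp + Nat.card C.supp ≤ Nat.card V := by
  have hTS : (S ∪ Subtype.val '' SH)ᶜ ⊆ Sᶜ := Set.compl_subset_compl.2 Set.subset_union_left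
  let ι := (G.induceHomOfLE hTS).toHom
  have hmap : ∀ w ∈ c.supp, ι w ∈ (c.map ι).supp := fun w hw => by
    rw [ConnectedComponent.mem_supp_iff, ← ConnectedComponent.map_mk,
      (ConnectedComponent.mem_supp_iff _ _).1 hw]
  -- `c` lies in the component `c.map ι` of `G - S`; if that is `C`, `c` embeds in `G[C] - SH`.
  by_cases hC : c.map ι = C
  · left
    have hA : ∀ w : c.supp, w.1.1 ∈ Subtype.val '' C.supp :=
      fun w => ⟨ι w, (hmap w w.2).trans hC, rfl⟩
    let f : c.toSimpleGraph →g (G.induce (Subtype.val '' C.supp)).induce SHᶜ :=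
      { toFun := fun w => ⟨⟨w.1.1, hA w⟩, fun h => w.1.2 (Or.inr ⟨_, h, rfl⟩)⟩
        map_rel' := id }
    obtain ⟨d, hd⟩ := c.connected_toSimpleGraph.exists_card_le_card_supp f
      (fun _ _ h => Subtype.ext (Subtype.ext (congrArg (fun x => x.1.1) h)))
    have hcardA : Nat.card (Subtype.val '' C.supp) = Nat.card C.supp :=
      Nat.card_image_of_injective Subtype.val_injective _
    calc (Nat.card c.supp : ℝ) ≤ Nat.card d.supp := by exact_mod_cast hd
      _ ≤ β * Nat.card C.supp := by rw [← hcardA]; exact hSH d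
  · right
    calc Nat.card c.supp + Nat.card C.supp ≤ Nat.card (c.map ι).supp + Nat.card C.supp :=
          Nat.add_le_add_right (c.card_supp_le_card_supp_map ι (G.induceHomOfLE hTS).injective) _
      _ ≤ Nat.card (Sᶜ : Set V) := ConnectedComponent.card_supp_add_card_supp_le hC
      _ ≤ Nat.card V := Finite.card_subtype_le _

lemma exists_isBalSep_max_pow [Finite V] {α β s : ℝ} (hα : 1 / 2 ≤ α) (hβ : 0 ≤ β) (hs : 0 ≤ s)
    (hsep : ∀ A : Set V, ∃ SH : Set A, IsBalSep (G.induce A) β SH ∧ (Nat.card SH : ℝ) ≤ s)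
    (k : ℕ) : ∃ S : Set V, IsBalSep G (max (β ^ k) α) S ∧ (Nat.card S : ℝ) ≤ k * s := by
  induction k with
  | zero => exact ⟨∅, (isBalSep_one G ∅).mono (by simp), by simp⟩
  | succ k ih =>
    obtain ⟨S, hS, hScard⟩ := ih
    by_cases hbig : ∃ C : (G.induce Sᶜ).ConnectedComponent, α * Nat.card V < Nat.card C.supp
    · obtain ⟨C, hC⟩ := hbig
      have hCle : (Nat.card C.supp : ℝ) ≤ β ^ k * Nat.card V := by
        have hCS := hS C
        rw [max_mul_of_nonneg _ _ (Nat.cast_nonneg _)] at hCS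
        exact (le_max_iff.1 hCS).resolve_right hC.not_ge
      obtain ⟨SH, hSH, hSHcard⟩ := hsep (Subtype.val '' C.supp)
      refine ⟨S ∪ Subtype.val '' SH, fun c => ?_, ?_⟩
      · rw [max_mul_of_nonneg _ _ (Nat.cast_nonneg _)]
        rcases card_supp_union_separator_le C hSH c with hinside | houtside
        · refine le_max_of_le_left ?_
          calc (Nat.card c.supp : ℝ) ≤ β * Nat.card C.supp := hinside
            _ ≤ β * (β ^ k * Nat.card V) := mul_le_mul_of_nonneg_left hCle hβ
            _ = β ^ (k + 1) * Nat.card V := by ring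
        · refine le_max_of_le_right ?_
          have hsum : (Nat.card c.supp : ℝ) + Nat.card C.supp ≤ Nat.card V := by
            exact_mod_cast houtside
          nlinarith [(Nat.card V).cast_nonneg (α := ℝ)]
      · have hunion : Nat.card ↥(S ∪ Subtype.val '' SH) ≤ Nat.card S + Nat.card SH := by
          simp only [Nat.card_coe_set_eq]
          rw [← Set.ncard_image_of_injective SH Subtype.val_injective]
          exact Set.ncard_union_le _ _
        calc (Nat.card ↥(S ∪ Subtype.val '' SH) : ℝ) ≤ Nat.card S + Nat.card SH := by
              exact_mod_cast hunion
          _ ≤ k * s + s := add_le_add hScard hSHcard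
          _ = ↑(k + 1) * s := by push_cast; ring
    · simp only [not_exists, not_lt] at hbig
      refine ⟨S, fun c => (hbig c).trans ?_, hScard.trans ?_⟩
      · exact mul_le_mul_of_nonneg_right (le_max_right _ _) (Nat.cast_nonneg _)
      · exact mul_le_mul_of_nonneg_right (by simp) hs

end BalancedSeparator

lemma one_sub_pow_ceil_one_div_le {δ : ℝ} (hδ0 : 0 < δ) (hδ1 : δ ≤ 1) :
    (1 - δ) ^ ⌈1 / δ⌉₊ ≤ 2 / 3 := by
  have hkδ : 1 ≤ ⌈1 / δ⌉₊ * δ := by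
    rw [← div_le_iff₀ hδ0]
    exact Nat.le_ceil _
  calc (1 - δ) ^ ⌈1 / δ⌉₊ ≤ Real.exp (-δ) ^ ⌈1 / δ⌉₊ :=
        pow_le_pow_left₀ (sub_nonneg.2 hδ1) (Real.one_sub_le_exp_neg δ) _
    _ = Real.exp (-(⌈1 / δ⌉₊ * δ)) := by rw [← Real.exp_nat_mul]; ring_nf
    _ ≤ Real.exp (-1) := Real.exp_le_exp.2 (neg_le_neg hkδ)
    _ ≤ 2 / 3 := by
      rw [Real.exp_neg, inv_le_comm₀ (Real.exp_pos 1) (by norm_num)]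
      linarith [Real.add_one_le_exp 1]

/-- If every induced subgraph `H` of a finite simple graph `G` has a `(1-δ)`-balanced
separator of size at most `s`, then `G` has a `2/3`-balanced separator of size at most
`⌈1/δ⌉ · s`. -/
theorem statement13 {V : Type} [Fintype V] (G : SimpleGraph V) (δ s : ℝ)
    (hδ0 : 0 < δ) (hδ1 : δ < 1) (hs : 0 ≤ s)
    (hsep : ∀ A : Set V, ∃ SH : Set ↥A,
      IsBalSep (G.induce A) (1 - δ) SH ∧ (Nat.card SH : ℝ) ≤ s) :
    ∃ S : Set V, IsBalSep G (2 / 3) S ∧ (Nat.card S : ℝ) ≤ (⌈1 / δ⌉₊ : ℝ) * s := by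
  obtain ⟨S, hS, hcard⟩ :=
    exists_isBalSep_max_pow (α := 2 / 3) (by norm_num) (sub_nonneg.2 hδ1.le) hs hsep ⌈1 / δ⌉₊
  exact ⟨S, hS.mono (max_le (one_sub_pow_ceil_one_div_le hδ0 hδ1.le) le_rfl), hcard⟩
end
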